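/- arXiv:2307.14942 — 10 statements merged into one kernel-verified Lean document; each statement's English description precedes it below -/
import Mathlib

section
/- Let γ ∈ ℝ and α > 0, and suppose the ℝ^{nd}-valued sequences {𝐱_k}, {𝐯_k}, {𝐲_k}, {ε_k}, {𝐠_k} satisfy, for all k ≥ 0: 𝐯_k = (I_{nd} − γ𝐐')𝐱_k + γ𝐐̂ε_k, 𝐱_{k+1} = 𝐯_k − α𝐲_k, and 𝐲_{k+1} = (I_{nd} − γ𝐐')𝐲_k + 𝐠_{k+1} − 𝐠_k + γ𝐐̂ε_k. Then for every k ≥ 1, Ψ_k = J_γ Ψ_{k−1} + α E_{k−1}, where Ψ_k := (Δ𝐯_k, Δ𝐱_k, αΔ𝐲_k) ∈ ℝ^{3nd} and E_{k−1} := (γ/α)·(𝐐̃ε_k, 𝐐̃ε_{k−1}, α𝐐̃ε_{k−1}) + (0, 0, Ī(𝐠_k − 𝐠_{k−1})). -/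
open Matrix Finset
open scoped Kronecker

noncomputable section

/-- The `nd × nd` averaging matrix `(1/n)(1ₙ1ₙᵀ ⊗ I_d)`. -/
def avgMat (n d : ℕ) : Matrix (Fin n × Fin d) (Fin n × Fin d) ℝ :=
  ((n : ℝ)⁻¹ • Matrix.of fun _ _ : Fin n => (1 : ℝ)) ⊗ₖ (1 : Matrix (Fin d) (Fin d) ℝ)

/-- `Ī := I_{nd} − (1/n)(1ₙ1ₙᵀ ⊗ I_d)`. -/
def Ibar (n d : ℕ) : Matrix (Fin n × Fin d) (Fin n × Fin d) ℝ :=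
  1 - avgMat n d

/-- `𝐐' := (Iₙ − Q) ⊗ I_d`. -/
def Qprime {n : ℕ} (Q : Matrix (Fin n) (Fin n) ℝ) (d : ℕ) :
    Matrix (Fin n × Fin d) (Fin n × Fin d) ℝ :=
  (1 - Q) ⊗ₖ (1 : Matrix (Fin d) (Fin d) ℝ)

/-- `𝐐̂ := (Q − diag(Q)) ⊗ I_d`. -/
def Qhat {n : ℕ} (Q : Matrix (Fin n) (Fin n) ℝ) (d : ℕ) :
    Matrix (Fin n × Fin d) (Fin n × Fin d) ℝ :=
  (Q - Matrix.diagonal fun i => Q i i) ⊗ₖ (1 : Matrix (Fin d) (Fin d) ℝ)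

/-- `𝐐̃ := Ī𝐐̂`. -/
def Qtilde {n : ℕ} (Q : Matrix (Fin n) (Fin n) ℝ) (d : ℕ) :
    Matrix (Fin n × Fin d) (Fin n × Fin d) ℝ :=
  Ibar n d * Qhat Q d

/-- The consensus-error part `Δ𝐳 := 𝐳 − 𝐳̄` of a vector `𝐳 ∈ ℝ^{nd}`. -/
def dvec {n d : ℕ} (z : (Fin n × Fin d) → ℝ) : (Fin n × Fin d) → ℝ :=
  z - (avgMat n d).mulVec z

/-- A vector of `ℝ^{3nd}` assembled from three blocks in `ℝ^{nd}`. -/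
def block3 {n d : ℕ} (a b c : (Fin n × Fin d) → ℝ) : (Fin 3 × (Fin n × Fin d)) → ℝ :=
  fun p => ![a, b, c] p.1 p.2

/-- A `3nd × 3nd` matrix assembled from a `3 × 3` array of `nd × nd` blocks. -/
def blockMat3 {n d : ℕ} (B : Fin 3 → Fin 3 → Matrix (Fin n × Fin d) (Fin n × Fin d) ℝ) :
    Matrix (Fin 3 × (Fin n × Fin d)) (Fin 3 × (Fin n × Fin d)) ℝ :=
  Matrix.of fun p q => B p.1 q.1 p.2 q.2

/-- The matrix `J_γ` of Lemma 1. -/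
def Jgamma {n : ℕ} (Q : Matrix (Fin n) (Fin n) ℝ) (d : ℕ) (γ : ℝ) :
    Matrix (Fin 3 × (Fin n × Fin d)) (Fin 3 × (Fin n × Fin d)) ℝ :=
  blockMat3
    ![![Ibar n d - γ • Qprime Q d, 0, -(Ibar n d - γ • Qprime Q d)],
      ![0, Ibar n d - γ • Qprime Q d, -(Ibar n d)],
      ![0, 0, Ibar n d - γ • Qprime Q d]]


section AuxLemmas

lemma blockMat3_mulVec {n d : ℕ} (B : Fin 3 → Fin 3 → Matrix (Fin n × Fin d) (Fin n × Fin d) ℝ)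
    (a b c : (Fin n × Fin d) → ℝ) :
    (blockMat3 B).mulVec (block3 a b c) =
      block3 ((B 0 0) *ᵥ a + (B 0 1) *ᵥ b + (B 0 2) *ᵥ c)
             ((B 1 0) *ᵥ a + (B 1 1) *ᵥ b + (B 1 2) *ᵥ c)
             ((B 2 0) *ᵥ a + (B 2 1) *ᵥ b + (B 2 2) *ᵥ c) := by
  funext p
  obtain ⟨i, q⟩ := p
  fin_cases i <;>
    simp [blockMat3, block3, Matrix.mulVec, dotProduct, Fintype.sum_prod_type,
      Fin.sum_univ_three]

lemma block3_add {n d : ℕ} (a b c a' b' c' : (Fin n × Fin d) → ℝ) :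
    block3 a b c + block3 a' b' c' = block3 (a + a') (b + b') (c + c') := by
  funext p
  obtain ⟨i, q⟩ := p
  fin_cases i <;> simp [block3]

lemma block3_smul {n d : ℕ} (s : ℝ) (a b c : (Fin n × Fin d) → ℝ) :
    s • block3 a b c = block3 (s • a) (s • b) (s • c) := by
  funext p
  obtain ⟨i, q⟩ := p
  fin_cases i <;> simp [block3]

lemma block3_congr {n d : ℕ} {a b c a' b' c' : (Fin n × Fin d) → ℝ}
    (h1 : a = a') (h2 : b = b') (h3 : c = c') : block3 a b c = block3 a' b' c' := by
  rw [h1, h2, h3]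

end AuxLemmas

/-- **Lemma 1, recursive relation for consensus errors.**
If `𝐯_k = (I − γ𝐐')𝐱_k + γ𝐐̂ε_k`, `𝐱_{k+1} = 𝐯_k − α𝐲_k` and
`𝐲_{k+1} = (I − γ𝐐')𝐲_k + 𝐠_{k+1} − 𝐠_k + γ𝐐̂ε_k`, then for every `k ≥ 1`,
`Ψ_k = J_γ Ψ_{k−1} + α E_{k−1}`, where `Ψ_k := (Δ𝐯_k, Δ𝐱_k, αΔ𝐲_k)` and
`E_{k−1} := (γ/α)(𝐐̃ε_k, 𝐐̃ε_{k−1}, α𝐐̃ε_{k−1}) + (0, 0, Ī(𝐠_k − 𝐠_{k−1}))`. -/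
theorem consensus_error_recursion {n d : ℕ} (hn : 2 ≤ n) (hd : 1 ≤ d)
    (Q : Matrix (Fin n) (Fin n) ℝ)
    (hQsymm : Q.IsSymm)
    (hQnonneg : ∀ i j, 0 ≤ Q i j)
    (hQrow : ∀ i, ∑ j, Q i j = 1)
    (hQcol : ∀ j, ∑ i, Q i j = 1)
    (hQherm : Q.IsHermitian)
    (hQsorted : ∀ i j : Fin n, i ≤ j → hQherm.eigenvalues j ≤ hQherm.eigenvalues i)
    (hQeig1 : hQherm.eigenvalues ⟨0, by omega⟩ = 1)
    (hQeig2 : hQherm.eigenvalues ⟨1, by omega⟩ < 1)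
    (hQeign : -1 < hQherm.eigenvalues ⟨n - 1, by omega⟩)
    (γ α : ℝ) (hα : 0 < α)
    (x v y ε g : ℕ → (Fin n × Fin d) → ℝ)
    (hv : ∀ k, v k =
      ((1 : Matrix (Fin n × Fin d) (Fin n × Fin d) ℝ) - γ • Qprime Q d).mulVec (x k)
        + γ • (Qhat Q d).mulVec (ε k))
    (hx : ∀ k, x (k + 1) = v k - α • y k)
    (hy : ∀ k, y (k + 1) =
      ((1 : Matrix (Fin n × Fin d) (Fin n × Fin d) ℝ) - γ • Qprime Q d).mulVec (y k)
        + g (k + 1) - g k + γ • (Qhat Q d).mulVec (ε k)) :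
    ∀ k, 1 ≤ k →
      block3 (dvec (v k)) (dvec (x k)) (α • dvec (y k)) =
        (Jgamma Q d γ).mulVec
          (block3 (dvec (v (k - 1))) (dvec (x (k - 1))) (α • dvec (y (k - 1))))
        + α • ((γ / α) • block3 ((Qtilde Q d).mulVec (ε k))
                  ((Qtilde Q d).mulVec (ε (k - 1)))
                  (α • (Qtilde Q d).mulVec (ε (k - 1)))
               + block3 0 0 ((Ibar n d).mulVec (g k - g (k - 1)))) := by
  intro k hk
  obtain ⟨m, rfl⟩ : ∃ m, k = m + 1 := ⟨k - 1, by omega⟩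
  simp only [Nat.add_sub_cancel]
  have hn0 : (n : ℝ) ≠ 0 := Nat.cast_ne_zero.mpr (by omega)
  have hαγ : α * (γ / α) = γ := by field_simp
  have hγα : γ / α * α = γ := div_mul_cancel₀ γ hα.ne'
  -- basic ones-matrix identities
  have hJQ : (Matrix.of fun _ _ : Fin n => (1 : ℝ)) * Q = Matrix.of fun _ _ => 1 := by
    ext i j; simp [Matrix.mul_apply, hQcol j]
  have hQJ : Q * (Matrix.of fun _ _ : Fin n => (1 : ℝ)) = Matrix.of fun _ _ => 1 := by
    ext i j; simp [Matrix.mul_apply, hQrow i]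
  -- block matrix identities
  have hPQ' : avgMat n d * Qprime Q d = 0 := by
    unfold avgMat Qprime
    rw [← Matrix.mul_kronecker_mul]
    have h0 : ((n : ℝ)⁻¹ • Matrix.of fun _ _ : Fin n => (1 : ℝ)) * (1 - Q) = 0 := by
      rw [Matrix.smul_mul, Matrix.mul_sub, Matrix.mul_one, hJQ, sub_self, smul_zero]
    rw [h0, Matrix.zero_kronecker]
  have hQ'P : Qprime Q d * avgMat n d = 0 := by
    unfold avgMat Qprime
    rw [← Matrix.mul_kronecker_mul]
    have h0 : (1 - Q) * ((n : ℝ)⁻¹ • Matrix.of fun _ _ : Fin n => (1 : ℝ)) = 0 := by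
      rw [Matrix.mul_smul, Matrix.sub_mul, Matrix.one_mul, hQJ, sub_self, smul_zero]
    rw [h0, Matrix.zero_kronecker]
  have hPP : avgMat n d * avgMat n d = avgMat n d := by
    unfold avgMat
    rw [← Matrix.mul_kronecker_mul, Matrix.mul_one]
    congr 1
    have hJJ : (Matrix.of fun _ _ : Fin n => (1 : ℝ)) * (Matrix.of fun _ _ => 1)
        = (n : ℝ) • Matrix.of fun _ _ => 1 := by
      ext i j; simp [Matrix.mul_apply]
    rw [Matrix.smul_mul, Matrix.mul_smul, hJJ, smul_smul, smul_smul]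
    congr 1
    field_simp
  have hIbA : Ibar n d * ((1 : Matrix (Fin n × Fin d) (Fin n × Fin d) ℝ) - γ • Qprime Q d)
      = Ibar n d - γ • Qprime Q d := by
    unfold Ibar
    rw [Matrix.sub_mul, Matrix.one_mul, Matrix.mul_sub, Matrix.mul_one, Matrix.mul_smul,
      hPQ', smul_zero, sub_zero]
    abel
  have hIbIb : Ibar n d * Ibar n d = Ibar n d := by
    unfold Ibar
    rw [Matrix.mul_sub, Matrix.mul_one, Matrix.sub_mul, Matrix.one_mul, hPP]
    abel
  have hQ'Ib : Qprime Q d * Ibar n d = Qprime Q d := by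
    unfold Ibar
    rw [Matrix.mul_sub, Matrix.mul_one, hQ'P, sub_zero]
  have hMIb : (Ibar n d - γ • Qprime Q d) * Ibar n d = Ibar n d - γ • Qprime Q d := by
    rw [Matrix.sub_mul, hIbIb, Matrix.smul_mul, hQ'Ib]
  have hIbQh : Ibar n d * Qhat Q d = Qtilde Q d := rfl
  have hdv : ∀ z : (Fin n × Fin d) → ℝ, dvec z = Ibar n d *ᵥ z := by
    intro z
    unfold dvec Ibar
    rw [Matrix.sub_mulVec, Matrix.one_mulVec]
  have hMA : (Ibar n d - γ • Qprime Q d) * ((1 : Matrix (Fin n × Fin d) (Fin n × Fin d) ℝ) - γ • Qprime Q d)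
      = (Ibar n d - γ • Qprime Q d) * (Ibar n d - γ • Qprime Q d) := by
    rw [Matrix.mul_sub, Matrix.mul_sub, Matrix.mul_one, hMIb]
  have hMQt : (Ibar n d - γ • Qprime Q d) * Qtilde Q d
      = (Ibar n d - γ • Qprime Q d) * Qhat Q d := by
    unfold Qtilde
    rw [← Matrix.mul_assoc, hMIb]
  -- reduce the RHS block structure
  unfold Jgamma
  rw [blockMat3_mulVec, block3_smul, block3_add, block3_smul, block3_add]
  simp only [Matrix.cons_val', Matrix.cons_val_zero, Matrix.cons_val_one, Matrix.head_cons,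
    Matrix.head_fin_const, Matrix.empty_val', Matrix.cons_val_fin_one, Matrix.cons_val_two,
    Matrix.tail_cons, Matrix.zero_mulVec, Matrix.neg_mulVec, zero_add, add_zero, smul_zero,
    smul_add, smul_smul, hαγ, hγα]
  apply block3_congr
  · simp only [hdv, hv, hx, Matrix.mulVec_add, Matrix.mulVec_sub, Matrix.mulVec_smul,
      Matrix.mulVec_mulVec, ← Matrix.mul_assoc, hIbA, hMIb, hIbIb, hIbQh, hMA, hMQt]
    abel
  · simp only [hdv, hv, hx, Matrix.mulVec_add, Matrix.mulVec_sub, Matrix.mulVec_smul,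
      Matrix.mulVec_mulVec, ← Matrix.mul_assoc, hIbA, hMIb, hIbIb, hIbQh, hMA, hMQt]
    abel
  · simp only [hdv, hy, Matrix.mulVec_add, Matrix.mulVec_sub, Matrix.mulVec_smul,
      Matrix.mulVec_mulVec, hIbA, hMIb, hIbIb, hIbQh]
    simp only [smul_add, smul_sub, smul_smul]
    abel
end
end

section
/- Let τ ≥ 1 be an integer, ρ' ∈ (0, 1/4], and b, c, r ≥ 0 with b ≤ ρ'/4, and let ρ'' ≥ 1. Suppose {a_t}_{t≥0} and {e_t}_{t≥0} are nonnegative real sequences such that a_t ≤ ρ'·a_{t−τ} + (b/τ)·Σ_{i=t−τ}^{t−1} a_i + c·Σ_{i=t−τ}^{t−1} e_i + r for every t ≥ τ, and a_t ≤ ρ''·a_0 + (b/τ)·Σ_{i=0}^{t−1} a_i + c·Σ_{i=0}^{t−1} e_i + r for every 0 < t < τ. Then, with ρ := 1 − 2ρ', for every t ≥ 1: a_t ≤ 20·ρ''·(1 − 3ρ/(4τ))^t · a_0 + 60·c·Σ_{i=0}^{t−1} (1 − 3ρ/(4τ))^{t−i} · e_i + 26·r/ρ. -/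
open Finset

set_option maxHeartbeats 1000000 in
/-- Let `τ ≥ 1` be an integer, `ρ' ∈ (0, 1/4]`, and `b, c, r ≥ 0` with
`b ≤ ρ'/4`, and let `ρ'' ≥ 1`.  Suppose `{a_t}` and `{e_t}` are nonnegative real sequences
such that `a_t ≤ ρ'·a_{t−τ} + (b/τ)·Σ_{i=t−τ}^{t−1} a_i + c·Σ_{i=t−τ}^{t−1} e_i + r` for
every `t ≥ τ`, and `a_t ≤ ρ''·a_0 + (b/τ)·Σ_{i=0}^{t−1} a_i + c·Σ_{i=0}^{t−1} e_i + r`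
for every `0 < t < τ`.  Then, with `ρ := 1 − 2ρ'`, for every `t ≥ 1`:
`a_t ≤ 20·ρ''·(1 − 3ρ/(4τ))^t·a_0 + 60·c·Σ_{i=0}^{t−1} (1 − 3ρ/(4τ))^{t−i}·e_i + 26·r/ρ`. -/
theorem sequence_decay {τ : ℕ} (hτ : 1 ≤ τ) {ρ' b c r ρ'' : ℝ}
    (hρ'0 : 0 < ρ') (hρ'1 : ρ' ≤ 1 / 4)
    (hb0 : 0 ≤ b) (hc0 : 0 ≤ c) (hr0 : 0 ≤ r) (hb : b ≤ ρ' / 4) (hρ'' : 1 ≤ ρ'')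
    {a e : ℕ → ℝ} (ha : ∀ t, 0 ≤ a t) (he : ∀ t, 0 ≤ e t)
    (hrec : ∀ t, τ ≤ t →
      a t ≤ ρ' * a (t - τ) + (b / τ) * ∑ i ∈ Ico (t - τ) t, a i
        + c * ∑ i ∈ Ico (t - τ) t, e i + r)
    (hrec0 : ∀ t, 0 < t → t < τ →
      a t ≤ ρ'' * a 0 + (b / τ) * ∑ i ∈ range t, a i
        + c * ∑ i ∈ range t, e i + r) :
    ∀ t, 1 ≤ t →
      a t ≤ 20 * ρ'' * (1 - 3 * (1 - 2 * ρ') / (4 * τ)) ^ t * a 0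
        + 60 * c * ∑ i ∈ range t, (1 - 3 * (1 - 2 * ρ') / (4 * τ)) ^ (t - i) * e i
        + 26 * r / (1 - 2 * ρ') := by
  have hτ1 : (1:ℝ) ≤ (τ:ℝ) := by exact_mod_cast hτ
  have hτ0 : (0:ℝ) < (τ:ℝ) := by linarith
  have hρpos : (0:ℝ) < 1 - 2*ρ' := by linarith
  set q : ℝ := 1 - 3 * (1 - 2 * ρ') / (4 * (τ:ℝ)) with hqdef
  clear_value q
  have hfrac0 : 0 ≤ 3 * (1 - 2 * ρ') / (4 * (τ:ℝ)) :=
    div_nonneg (by linarith) (by linarith)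
  have hfrac1 : 3 * (1 - 2 * ρ') / (4 * (τ:ℝ)) ≤ 3/4 := by
    rw [div_le_iff₀ (by linarith : (0:ℝ) < 4*(τ:ℝ))]
    nlinarith [mul_nonneg hρ'0.le hτ0.le]
  have hq1 : q ≤ 1 := by rw [hqdef]; linarith
  have hq4 : 1/4 ≤ q := by rw [hqdef]; linarith
  have hq0' : (0:ℝ) ≤ q := by linarith
  have hqpow : ∀ {m n : ℕ}, m ≤ n → q ^ n ≤ q ^ m :=
    fun {m n} h => pow_le_pow_of_le_one hq0' hq1 h
  have hP : 1/4 + 3*ρ'/2 ≤ q ^ τ := by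
    have hber := one_add_mul_le_pow
      (a := -(3 * (1 - 2 * ρ') / (4 * (τ:ℝ)))) (by linarith) τ
    have heq : (1:ℝ) + (τ:ℝ) * -(3 * (1 - 2 * ρ') / (4 * (τ:ℝ))) = 1/4 + 3*ρ'/2 := by
      field_simp
      ring
    have hq' : (1:ℝ) + -(3 * (1 - 2 * ρ') / (4 * (τ:ℝ))) = q := by
      rw [hqdef]; ring
    rw [heq, hq'] at hber
    exact hber
  have hP0 : (0:ℝ) < q ^ τ := pow_pos (by linarith) τ
  have hP4 : (1:ℝ)/4 ≤ q ^ τ := by linarith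
  set R := 26 * r / (1 - 2 * ρ') with hRdef
  clear_value R
  have hR0 : 0 ≤ R := by
    rw [hRdef]; exact div_nonneg (by linarith) (by linarith)
  have hrR : 26 * r ≤ R := by
    rw [hRdef, le_div_iff₀ hρpos]; nlinarith [mul_nonneg hr0 hρ'0.le]
  have hSnn : ∀ u : ℕ, 0 ≤ ∑ i ∈ range u, q^(u-i) * e i :=
    fun u => Finset.sum_nonneg fun i _ => mul_nonneg (pow_nonneg hq0' _) (he i)
  have hSmono : ∀ u v : ℕ, u ≤ v → v ≤ u + τ →
      q^τ * ∑ i ∈ range u, q^(u-i) * e i ≤ ∑ i ∈ range v, q^(v-i) * e i := by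
    intro u v huv hvu
    rw [Finset.mul_sum]
    calc ∑ i ∈ range u, q^τ * (q^(u-i) * e i)
        ≤ ∑ i ∈ range u, q^(v-i) * e i := by
          apply Finset.sum_le_sum
          intro i hi
          simp only [Finset.mem_range] at hi
          rw [← mul_assoc, ← pow_add]
          exact mul_le_mul_of_nonneg_right (hqpow (by omega)) (he i)
      _ ≤ ∑ i ∈ range v, q^(v-i) * e i := by
          apply Finset.sum_le_sum_of_subset_of_nonneg (Finset.range_subset_range.mpr huv)
          intro i _ _
          exact mul_nonneg (pow_nonneg hq0' _) (he i)
  have key : ∀ t, a t ≤ 20*ρ''*q^t*a 0 + 60*c*(∑ i ∈ range t, q^(t-i)*e i) + R := by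
    intro t
    induction t using Nat.strong_induction_on with
    | _ t IH =>
    rcases Nat.eq_zero_or_pos t with rfl | ht0
    · simp only [pow_zero, Finset.range_zero, Finset.sum_empty, mul_zero, mul_one]
      nlinarith [ha 0, hR0, mul_nonneg (show (0:ℝ) ≤ 20*ρ''-1 by linarith) (ha 0)]
    set A := 20*ρ''*q^t*a 0 + 60*c*(∑ i ∈ range t, q^(t-i)*e i) with hAdef
    clear_value A
    have hG0 : 0 ≤ q^t * a 0 := mul_nonneg (pow_nonneg hq0' _) (ha 0)
    have hE0 : 0 ≤ ∑ i ∈ range t, q^(t-i)*e i := hSnn t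
    have hA0 : 0 ≤ A := by
      rw [hAdef]
      nlinarith [mul_nonneg (show (0:ℝ) ≤ 20*ρ'' by linarith) hG0,
        mul_nonneg (show (0:ℝ) ≤ 60*c by linarith) hE0]
    obtain ⟨X, hPX, hX0⟩ : ∃ X, q^τ * X = A + q^τ * R ∧ 0 ≤ X :=
      ⟨(A + q^τ * R)/(q^τ), by field_simp,
        div_nonneg (add_nonneg hA0 (mul_nonneg hP0.le hR0)) hP0.le⟩
    obtain ⟨Y, hPY, hY0⟩ : ∃ Y, q^τ * Y = ∑ i ∈ range t, q^(t-i)*e i ∧ 0 ≤ Y :=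
      ⟨(∑ i ∈ range t, q^(t-i)*e i)/(q^τ), by field_simp, div_nonneg hE0 hP0.le⟩
    have hXb : ∀ i, i < t → t ≤ i + τ → a i ≤ X := by
      intro i hit hti
      have hIH := IH i hit
      have h1 : q^τ * q^i ≤ q^t := by rw [← pow_add]; exact hqpow (by omega)
      have h2 : q^τ * (∑ j ∈ range i, q^(i-j)*e j) ≤ ∑ j ∈ range t, q^(t-j)*e j :=
        hSmono i t (le_of_lt hit) hti
      have h3 : q^τ * a i ≤ q^τ * X := by
        rw [hPX, hAdef]
        have hm := mul_le_mul_of_nonneg_left hIH hP0.le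
        have t1 := mul_le_mul_of_nonneg_left
          (mul_le_mul_of_nonneg_right h1 (ha 0)) (show (0:ℝ) ≤ 20*ρ'' by linarith)
        have t2 := mul_le_mul_of_nonneg_left h2 (show (0:ℝ) ≤ 60*c by linarith)
        linarith [hm, t1, t2]
      exact le_of_mul_le_mul_left h3 hP0
    rcases Nat.lt_or_ge t τ with htτ | htτ
    · -- case 0 < t < τ
      have hstep := hrec0 t ht0 htτ
      have hsum : ∑ i ∈ range t, a i ≤ (t:ℝ) * X := by
        calc ∑ i ∈ range t, a i ≤ ∑ _i ∈ range t, X :=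
              Finset.sum_le_sum (fun i hi => hXb i (Finset.mem_range.mp hi) (by
                have := Finset.mem_range.mp hi; omega))
          _ = (t:ℝ) * X := by
              rw [Finset.sum_const, Finset.card_range, nsmul_eq_mul]
      have hesum : ∑ i ∈ range t, e i ≤ Y := by
        have h1 : q^τ * (∑ i ∈ range t, e i) ≤ q^τ * Y := by
          rw [hPY, Finset.mul_sum]
          apply Finset.sum_le_sum
          intro i hi
          simp only [Finset.mem_range] at hi
          exact mul_le_mul_of_nonneg_right (hqpow (by omega)) (he i)
        exact le_of_mul_le_mul_left h1 hP0
      have hZ : q^τ * a 0 ≤ q^t * a 0 :=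
        mul_le_mul_of_nonneg_right (hqpow (le_of_lt htτ)) (ha 0)
      have hbt : (b/(τ:ℝ)) * ∑ i ∈ range t, a i ≤ b * X := by
        have h1 : (b/(τ:ℝ)) * ∑ i ∈ range t, a i ≤ (b/(τ:ℝ)) * ((t:ℝ) * X) :=
          mul_le_mul_of_nonneg_left hsum (div_nonneg hb0 hτ0.le)
        have ht' : (t:ℝ) ≤ (τ:ℝ) := by exact_mod_cast le_of_lt htτ
        have h2 : (b/(τ:ℝ)) * ((t:ℝ) * X) ≤ b * X := by
          rw [div_mul_eq_mul_div, div_le_iff₀ hτ0]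
          nlinarith [mul_nonneg (sub_nonneg.mpr ht') (mul_nonneg hb0 hX0)]
        linarith
      have hat : a t ≤ ρ'' * a 0 + b * X + c * Y + r := by
        have h1 := mul_le_mul_of_nonneg_left hesum hc0
        linarith [hstep, hbt]
      have hfin : q^τ * a t ≤ q^τ * (A + R) := by
        have h0 := mul_le_mul_of_nonneg_left hat hP0.le
        have f1 : b * (q^τ * X) = b*A + b*(q^τ*R) := by rw [hPX]; ring
        have f2 : c * (q^τ * Y) = c * (∑ i ∈ range t, q^(t-i)*e i) := by rw [hPY]
        have f3 := mul_le_mul_of_nonneg_left hZ (show (0:ℝ) ≤ ρ'' by linarith)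
        have hrG : 0 ≤ ρ'' * (q^t * a 0) := mul_nonneg (by linarith) hG0
        have hcE : 0 ≤ c * (∑ i ∈ range t, q^(t-i)*e i) := mul_nonneg hc0 hE0
        have hPR : 0 ≤ q^τ * R := mul_nonneg hP0.le hR0
        have g1 : b * (ρ'' * (q^t * a 0)) ≤ (1/16) * (ρ'' * (q^t * a 0)) :=
          mul_le_mul_of_nonneg_right (by linarith) hrG
        have g2 : b * (c * (∑ i ∈ range t, q^(t-i)*e i)) ≤
            (1/16) * (c * (∑ i ∈ range t, q^(t-i)*e i)) :=
          mul_le_mul_of_nonneg_right (by linarith) hcE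
        have g3 : b * (q^τ * R) ≤ (1/16) * (q^τ * R) :=
          mul_le_mul_of_nonneg_right (by linarith) hPR
        have g4 : q^τ * r ≤ q^τ * (R/26) :=
          mul_le_mul_of_nonneg_left (by linarith) hP0.le
        have g5 : (1/4) * (ρ'' * (q^t * a 0)) ≤ q^τ * (ρ'' * (q^t * a 0)) :=
          mul_le_mul_of_nonneg_right hP4 hrG
        have g6 : (1/4) * (c * (∑ i ∈ range t, q^(t-i)*e i)) ≤
            q^τ * (c * (∑ i ∈ range t, q^(t-i)*e i)) :=
          mul_le_mul_of_nonneg_right hP4 hcE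
        rw [hAdef] at f1 ⊢
        linarith [h0, f1, f2, f3, g1, g2, g3, g4, g5, g6, hPR, hrG, hcE]
      exact le_of_mul_le_mul_left hfin hP0
    · -- case t ≥ τ
      have hstep := hrec t htτ
      have hsum : ∑ i ∈ Ico (t-τ) t, a i ≤ (τ:ℝ) * X := by
        calc ∑ i ∈ Ico (t-τ) t, a i ≤ ∑ _i ∈ Ico (t-τ) t, X :=
              Finset.sum_le_sum (fun i hi => by
                rw [Finset.mem_Ico] at hi
                exact hXb i hi.2 (by omega))
          _ = (τ:ℝ) * X := by
              rw [Finset.sum_const, Nat.card_Ico, nsmul_eq_mul]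
              have hτt : t - (t - τ) = τ := by omega
              rw [hτt]
      have hesum : ∑ i ∈ Ico (t-τ) t, e i ≤ Y := by
        have h1 : q^τ * (∑ i ∈ Ico (t-τ) t, e i) ≤ q^τ * Y := by
          rw [hPY, Finset.mul_sum]
          calc ∑ i ∈ Ico (t-τ) t, q^τ * e i
              ≤ ∑ i ∈ Ico (t-τ) t, q^(t-i) * e i :=
                Finset.sum_le_sum (fun i hi => by
                  rw [Finset.mem_Ico] at hi
                  exact mul_le_mul_of_nonneg_right (hqpow (by omega)) (he i))
            _ ≤ ∑ i ∈ range t, q^(t-i) * e i := by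
                apply Finset.sum_le_sum_of_subset_of_nonneg
                · intro i hi; rw [Finset.mem_Ico] at hi
                  exact Finset.mem_range.mpr hi.2
                · intro i _ _; exact mul_nonneg (pow_nonneg hq0' _) (he i)
        exact le_of_mul_le_mul_left h1 hP0
      have haτ : a (t - τ) ≤ X := hXb (t-τ) (by omega) (by omega)
      have hbt : (b/(τ:ℝ)) * ∑ i ∈ Ico (t-τ) t, a i ≤ b * X := by
        have h1 := mul_le_mul_of_nonneg_left hsum (div_nonneg hb0 hτ0.le)
        have h2 : (b/(τ:ℝ)) * ((τ:ℝ) * X) = b * X := by field_simp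
        linarith
      have hat : a t ≤ ρ' * X + b * X + c * Y + r := by
        have h1 := mul_le_mul_of_nonneg_left hesum hc0
        have h2 := mul_le_mul_of_nonneg_left haτ hρ'0.le
        linarith [hstep, hbt]
      have hfin : q^τ * a t ≤ q^τ * (A + R) := by
        have h0 := mul_le_mul_of_nonneg_left hat hP0.le
        have f1 : ρ' * (q^τ * X) = ρ'*A + ρ'*(q^τ*R) := by rw [hPX]; ring
        have f1b : b * (q^τ * X) = b*A + b*(q^τ*R) := by rw [hPX]; ring
        have f2 : c * (q^τ * Y) = c * (∑ i ∈ range t, q^(t-i)*e i) := by rw [hPY]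
        have hcE : 0 ≤ c * (∑ i ∈ range t, q^(t-i)*e i) := mul_nonneg hc0 hE0
        have hPR : 0 ≤ q^τ * R := mul_nonneg hP0.le hR0
        have gb : b * A ≤ (ρ'/4) * A := mul_le_mul_of_nonneg_right hb hA0
        have gq : (1/4 + 3*ρ'/2) * A ≤ q^τ * A := mul_le_mul_of_nonneg_right hP hA0
        have gcE : 60 * (c * (∑ i ∈ range t, q^(t-i)*e i)) ≤ A := by
          rw [hAdef]
          nlinarith [mul_nonneg (show (0:ℝ) ≤ 20*ρ'' by linarith) hG0]
        have grA : 0 ≤ ρ' * A := mul_nonneg hρ'0.le hA0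
        have g3 : b * (q^τ * R) ≤ (1/16) * (q^τ * R) :=
          mul_le_mul_of_nonneg_right (by linarith) hPR
        have g3' : ρ' * (q^τ * R) ≤ (1/4) * (q^τ * R) :=
          mul_le_mul_of_nonneg_right (by linarith) hPR
        have g4 : q^τ * r ≤ q^τ * (R/26) :=
          mul_le_mul_of_nonneg_left (by linarith) hP0.le
        linarith [h0, f1, f1b, f2, gb, gq, gcE, grA, g3, g3', g4, hPR, hcE, hA0]
      exact le_of_mul_le_mul_left hfin hP0
  intro t _
  exact key t
end

section
/- Let γ ∈ ℝ and set M := Ī − γ𝐐'. Then for every integer τ ≥ 1, the τ-fold power of J_γ is the block matrix J_γ^τ = [[M^τ, 0, −τ·M^τ], [0, M^τ, −τ·M^{τ−1}·Ī], [0, 0, M^τ]] (so the (2,3)-block equals −τ·M^{τ−1} for τ ≥ 2 and −Ī for τ = 1). -/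
open Matrix Finset
open scoped Kronecker

noncomputable section

lemma blockMat3_mul {n d : ℕ}
    (B C : Fin 3 → Fin 3 → Matrix (Fin n × Fin d) (Fin n × Fin d) ℝ) :
    blockMat3 B * blockMat3 C = blockMat3 (fun i j => ∑ k, B i k * C k j) := by
  ext ⟨p, x⟩ ⟨q, y⟩
  simp only [blockMat3, Matrix.mul_apply, Matrix.of_apply, Fintype.sum_prod_type,
    Matrix.sum_apply]

lemma avgMat_comm {n d : ℕ} (Q : Matrix (Fin n) (Fin n) ℝ)
    (hQrow : ∀ i, ∑ j, Q i j = 1)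
    (hQcol : ∀ j, ∑ i, Q i j = 1) :
    avgMat n d * Qprime Q d = Qprime Q d * avgMat n d := by
  unfold avgMat Qprime
  rw [← Matrix.mul_kronecker_mul, ← Matrix.mul_kronecker_mul]
  have h1 : (Matrix.of fun _ _ : Fin n => (1 : ℝ)) * (1 - Q)
        = (1 - Q) * (Matrix.of fun _ _ : Fin n => (1 : ℝ)) := by
      ext i j
      simp [Matrix.mul_apply, Matrix.sub_apply, Finset.sum_sub_distrib, hQrow i, hQcol j,
        Matrix.one_apply]
  rw [Matrix.smul_mul, Matrix.mul_smul, h1]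

lemma Ibar_comm {n d : ℕ} (Q : Matrix (Fin n) (Fin n) ℝ)
    (hQrow : ∀ i, ∑ j, Q i j = 1)
    (hQcol : ∀ j, ∑ i, Q i j = 1) (γ : ℝ) :
    Ibar n d * (Ibar n d - γ • Qprime Q d) = (Ibar n d - γ • Qprime Q d) * Ibar n d := by
  have h : Commute (avgMat n d) (Qprime Q d) := avgMat_comm Q hQrow hQcol
  have c1 : Commute (Ibar n d) (Qprime Q d) := (Commute.one_left _).sub_left h
  exact ((Commute.refl (Ibar n d)).sub_right (c1.smul_right γ))

/-- Let `γ ∈ ℝ` and set `M := Ī − γ𝐐'`.  Then for every integer `τ ≥ 1`,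
`J_γ^τ = [[M^τ, 0, −τ·M^τ], [0, M^τ, −τ·M^{τ−1}·Ī], [0, 0, M^τ]]` (so the `(2,3)`-block
equals `−τ·M^{τ−1}` for `τ ≥ 2` and `−Ī` for `τ = 1`). -/
theorem Jgamma_pow {n d : ℕ} (hn : 2 ≤ n) (hd : 1 ≤ d)
    (Q : Matrix (Fin n) (Fin n) ℝ)
    (hQnonneg : ∀ i j, 0 ≤ Q i j)
    (hQrow : ∀ i, ∑ j, Q i j = 1)
    (hQcol : ∀ j, ∑ i, Q i j = 1)
    (γ : ℝ) :
    ∀ τ : ℕ, 1 ≤ τ →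
      Jgamma Q d γ ^ τ =
        blockMat3
          ![![(Ibar n d - γ • Qprime Q d) ^ τ, 0,
              -((τ : ℝ) • (Ibar n d - γ • Qprime Q d) ^ τ)],
            ![0, (Ibar n d - γ • Qprime Q d) ^ τ,
              -((τ : ℝ) • ((Ibar n d - γ • Qprime Q d) ^ (τ - 1) * Ibar n d))],
            ![0, 0, (Ibar n d - γ • Qprime Q d) ^ τ]] := by
  have hcomm : Ibar n d * (Ibar n d - γ • Qprime Q d)
      = (Ibar n d - γ • Qprime Q d) * Ibar n d := Ibar_comm Q hQrow hQcol γ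
  set M := Ibar n d - γ • Qprime Q d with hM
  intro τ
  induction τ with
  | zero => intro h; omega
  | succ t ih =>
    intro _
    rcases Nat.eq_zero_or_pos t with ht | ht
    · subst ht
      rw [pow_one, Jgamma]
      apply congrArg
      funext i j
      fin_cases i <;> fin_cases j <;>
        simp [hM]
    · have ih' := ih ht
      have key : (M ^ (t - 1) * Ibar n d) * M = M ^ t * Ibar n d := by
        rw [mul_assoc, hcomm, ← mul_assoc, ← pow_succ, Nat.sub_add_cancel ht]
      rw [pow_succ, ih', Jgamma, blockMat3_mul]
      apply congrArg
      funext i j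
      fin_cases i <;> fin_cases j <;>
        simp [Fin.sum_univ_three, ← hM, pow_succ, smul_mul_assoc, key,
          Nat.add_sub_cancel, mul_neg, Matrix.neg_mul,
          Matrix.vecHead, Matrix.vecTail] <;>
        module
end
end

section
/- Let τ ≥ 1 be an integer, ρ' ∈ (0, 1], ρ'' ≥ 1, and b, c, r ≥ 0 with b ≤ 1/4. Suppose {a_t}_{t≥0} and {e_t}_{t≥0} are nonnegative real sequences such that a_t ≤ ρ''·a_0 + (b/τ)·Σ_{i=0}^{t−1} a_i + c·Σ_{i=0}^{t−1} e_i + r for every 0 < t < τ, and a_t ≤ ρ'·a_{t−τ} + (b/τ)·Σ_{i=t−τ}^{t−1} a_i + c·Σ_{i=t−τ}^{t−1} e_i + r for every t ≥ τ. Then for every j with 0 ≤ j < 2τ: a_j ≤ 2·ρ''·a_0 + 2·c·Σ_{i=0}^{j−1} e_i + 4·r. -/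
open Finset

/-- Let `τ ≥ 1` be an integer, `ρ' ∈ (0, 1]`, `ρ'' ≥ 1`, and
`b, c, r ≥ 0` with `b ≤ 1/4`.  Suppose `{a_t}` and `{e_t}` are nonnegative real sequences
such that `a_t ≤ ρ''·a_0 + (b/τ)·Σ_{i=0}^{t−1} a_i + c·Σ_{i=0}^{t−1} e_i + r` for every
`0 < t < τ`, and `a_t ≤ ρ'·a_{t−τ} + (b/τ)·Σ_{i=t−τ}^{t−1} a_i + c·Σ_{i=t−τ}^{t−1} e_i + r`
for every `t ≥ τ`.  Then for every `j` with `0 ≤ j < 2τ`: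
`a_j ≤ 2·ρ''·a_0 + 2·c·Σ_{i=0}^{j−1} e_i + 4·r`. -/
theorem sequence_short_range_bound {τ : ℕ} (hτ : 1 ≤ τ) {ρ' ρ'' b c r : ℝ}
    (hρ'0 : 0 < ρ') (hρ'1 : ρ' ≤ 1) (hρ'' : 1 ≤ ρ'')
    (hb0 : 0 ≤ b) (hc0 : 0 ≤ c) (hr0 : 0 ≤ r) (hb : b ≤ 1 / 4)
    {a e : ℕ → ℝ} (ha : ∀ t, 0 ≤ a t) (he : ∀ t, 0 ≤ e t)
    (hrec0 : ∀ t, 0 < t → t < τ →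
      a t ≤ ρ'' * a 0 + (b / τ) * ∑ i ∈ range t, a i
        + c * ∑ i ∈ range t, e i + r)
    (hrec : ∀ t, τ ≤ t →
      a t ≤ ρ' * a (t - τ) + (b / τ) * ∑ i ∈ Ico (t - τ) t, a i
        + c * ∑ i ∈ Ico (t - τ) t, e i + r) :
    ∀ j, j < 2 * τ →
      a j ≤ 2 * ρ'' * a 0 + 2 * c * ∑ i ∈ range j, e i + 4 * r := by
  have hτR : (0:ℝ) < τ := by exact_mod_cast hτ
  set S : ℕ → ℝ := fun j => ∑ i ∈ range j, e i with hS
  have hS0 : ∀ j, 0 ≤ S j := fun j => Finset.sum_nonneg fun i _ => he i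
  have hSmono : ∀ i j, i ≤ j → S i ≤ S j := by
    intro i j hij
    exact Finset.sum_le_sum_of_subset_of_nonneg (Finset.range_subset_range.2 hij)
      (fun k _ _ => he k)
  have ha0 : 0 ≤ ρ'' * a 0 := mul_nonneg (le_trans zero_le_one hρ'') (ha 0)
  have key : ∀ j, (j < τ → a j ≤ 4/3 * (ρ'' * a 0 + c * S j + r)) ∧
      (j < 2*τ → a j ≤ 2*ρ''*a 0 + 2*c*S j + 4*r) := by
    intro j
    induction j using Nat.strong_induction_on with
    | _ j IH =>
      have phase1 : j < τ → a j ≤ 4/3 * (ρ'' * a 0 + c * S j + r) := by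
        intro hjτ
        have hcS : 0 ≤ c * S j := mul_nonneg hc0 (hS0 j)
        rcases Nat.eq_zero_or_pos j with h0 | hpos
        · subst h0
          nlinarith [ha 0]
        · have hr := hrec0 j hpos hjτ
          set K : ℝ := 4/3 * (ρ'' * a 0 + c * S j + r) with hK
          have hK0 : 0 ≤ K := by positivity
          have hsum : ∑ i ∈ range j, a i ≤ (j : ℝ) * K := by
            calc ∑ i ∈ range j, a i ≤ ∑ i ∈ range j, K := by
                  apply Finset.sum_le_sum
                  intro i hi
                  have hij : i < j := Finset.mem_range.1 hi
                  have := (IH i hij).1 (hij.trans hjτ)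
                  have hSle : c * S i ≤ c * S j :=
                    mul_le_mul_of_nonneg_left (hSmono i j hij.le) hc0
                  nlinarith
              _ = (j : ℝ) * K := by simp [mul_comm]
          have hbd : (b / τ) * ∑ i ∈ range j, a i ≤ (1/4) * K := by
            have h1 : (b / τ) * ∑ i ∈ range j, a i ≤ (b / τ) * ((j:ℝ) * K) :=
              mul_le_mul_of_nonneg_left hsum (by positivity)
            have hjτ' : (j : ℝ) ≤ (τ : ℝ) := by exact_mod_cast hjτ.le
            have h2 : (b / τ) * ((j:ℝ) * K) ≤ (1/4) * K := by
              have heq : (b / τ) * ((j:ℝ) * K) = (b * ((j:ℝ)/τ)) * K := by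
                field_simp
              have hjd : (j:ℝ)/τ ≤ 1 := by rw [div_le_one hτR]; exact hjτ'
              have hjd0 : 0 ≤ (j:ℝ)/τ := by positivity
              have hfrac : b * ((j:ℝ)/τ) ≤ 1/4 := by nlinarith
              rw [heq]
              exact mul_le_mul_of_nonneg_right hfrac hK0
            linarith
          have hScS : c * S j ≤ c * S j := le_refl _
          linarith
      refine ⟨phase1, ?_⟩
      intro hj2
      have hcSj : 0 ≤ c * S j := mul_nonneg hc0 (hS0 j)
      by_cases hjτ : j < τ
      · have := phase1 hjτ
        linarith
      · push_neg at hjτ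
        have hr := hrec j hjτ
        set m := j - τ with hm
        have hmτ : m < τ := by omega
        have hmj : m < j := by omega
        have ham : a m ≤ 4/3 * (ρ'' * a 0 + c * S m + r) := (IH m hmj).1 hmτ
        set L : ℝ := 2*ρ''*a 0 + 2*c*S j + 4*r with hL
        have hL0 : 0 ≤ L := by simp only [hL]; linarith
        have hsum : ∑ i ∈ Ico m j, a i ≤ (τ : ℝ) * L := by
          calc ∑ i ∈ Ico m j, a i ≤ ∑ i ∈ Ico m j, L := by
                apply Finset.sum_le_sum
                intro i hi
                have hij : i < j := (Finset.mem_Ico.1 hi).2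
                have := (IH i hij).2 (hij.trans hj2)
                have hSle : c * S i ≤ c * S j :=
                  mul_le_mul_of_nonneg_left (hSmono i j hij.le) hc0
                simp only [hL]
                nlinarith
            _ = ((j - m : ℕ) : ℝ) * L := by
                rw [Finset.sum_const, Nat.card_Ico]; simp [mul_comm]
            _ = (τ : ℝ) * L := by
                congr 1
                have : j - m = τ := by omega
                rw [this]
        have hbd : (b / τ) * ∑ i ∈ Ico m j, a i ≤ (1/4) * L := by
          have h1 : (b / τ) * ∑ i ∈ Ico m j, a i ≤ (b / τ) * ((τ:ℝ) * L) :=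
            mul_le_mul_of_nonneg_left hsum (by positivity)
          have h2 : (b / τ) * ((τ:ℝ) * L) = b * L := by
            field_simp
          nlinarith
        have hSsplit : ∑ i ∈ Ico m j, e i = S j - S m := by
          simp only [hS]
          rw [Finset.sum_Ico_eq_sub _ hmj.le]
        have hρam : ρ' * a m ≤ a m := by nlinarith [ha m]
        have hSmle : c * S m ≤ c * S j :=
          mul_le_mul_of_nonneg_left (hSmono m j hmj.le) hc0
        have hcSm : 0 ≤ c * S m := mul_nonneg hc0 (hS0 m)
        rw [hSsplit] at hr
        have : c * (S j - S m) = c * S j - c * S m := by ring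
        rw [this] at hr
        simp only [hL] at hbd
        linarith
  intro j hj
  exact (key j).2 hj
end

section
/- Let γ ∈ (0, 1/2] and set M := Ī − γ𝐐'. Then for every integer i ≥ 0, the spectral norm satisfies ‖(i+1)·M^{i+1}·Ī − i·M^{i}·Ī‖² ≤ 4. -/
/-!
Write `P := I - J/n` for the centering matrix and `B := P - γ (I - Q)`, so that `Ī = P ⊗ I_d` and
`M = B ⊗ I_d`. A doubly stochastic `Q` commutes with `J`, which gives `B = P ((1 - γ) I + γ Q) P`
and hence `M Ī = M`; since also `‖Q‖ ≤ 1`, i.e. `-I ≤ Q ≤ I`, we get `0 ≤ B ≤ I` for `γ ≤ 1/2`.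
The matrix to estimate is therefore `(i + 1) M^(i+1) - i M^i` with `0 ≤ M ≤ I`, and diagonalising
`M` reduces its norm to the scalar bound `|(i + 1) μ^(i+1) - i μ^i| ≤ 1` on `[0, 1]`, which follows
from `i μ^i (1 - μ) ≤ 1 - μ^i`.
-/

open Matrix Finset
open scoped Kronecker Matrix.Norms.L2Operator

noncomputable section

open scoped MatrixOrder

theorem nat_mul_pow_mul_one_sub_le_one_sub_pow {μ : ℝ} (h0 : 0 ≤ μ) (h1 : μ ≤ 1) (i : ℕ) :
    i * μ ^ i * (1 - μ) ≤ 1 - μ ^ i := by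
  have hsum : (i : ℝ) * μ ^ i ≤ ∑ k ∈ range i, μ ^ k := by
    simpa using Finset.card_nsmul_le_sum (range i) (μ ^ ·) (μ ^ i)
      fun k hk => pow_le_pow_of_le_one h0 h1 (mem_range.1 hk).le
  calc (i : ℝ) * μ ^ i * (1 - μ) = (1 - μ) * (i * μ ^ i) := by ring
    _ ≤ (1 - μ) * ∑ k ∈ range i, μ ^ k := mul_le_mul_of_nonneg_left hsum (sub_nonneg.2 h1)
    _ = 1 - μ ^ i := mul_neg_geom_sum μ i

theorem abs_succ_mul_pow_succ_sub_mul_pow_le_one {μ : ℝ} (h0 : 0 ≤ μ) (h1 : μ ≤ 1) (i : ℕ) :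
    |((i : ℝ) + 1) * μ ^ (i + 1) - i * μ ^ i| ≤ 1 := by
  have hsplit : ((i : ℝ) + 1) * μ ^ (i + 1) - i * μ ^ i = μ ^ (i + 1) - i * μ ^ i * (1 - μ) := by
    ring
  have hnonneg : 0 ≤ (i : ℝ) * μ ^ i * (1 - μ) := by
    have := pow_nonneg h0 i
    have := sub_nonneg.2 h1
    positivity
  have hle := nat_mul_pow_mul_one_sub_le_one_sub_pow h0 h1 i
  rw [hsplit, abs_le]
  constructor <;> linarith [pow_nonneg h0 i, pow_nonneg h0 (i + 1), pow_le_one₀ (n := i + 1) h0 h1]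

section Spectral

variable {ι : Type*} [Fintype ι] [DecidableEq ι]

open Polynomial in
theorem Matrix.IsHermitian.l2_opNorm_aeval {𝕜 : Type*} [RCLike 𝕜] {A : Matrix ι ι 𝕜}
    (hA : A.IsHermitian) (p : 𝕜[X]) :
    ‖aeval A p‖ = ‖fun j => p.eval (hA.eigenvalues j : 𝕜)‖ := by
  have hdiag : aeval (diagonal (RCLike.ofReal ∘ hA.eigenvalues)) p
      = diagonal fun j => p.eval (hA.eigenvalues j : 𝕜) := by
    rw [← diagonalAlgHom_apply 𝕜, aeval_algHom_apply]
    ext i j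
    simp [diagonal_apply]
  conv_lhs => rw [hA.spectral_theorem]
  rw [aeval_algHom_apply, hdiag, Unitary.conjStarAlgAut_apply,
    CStarRing.norm_mul_mem_unitary _ (Unitary.star_mem hA.eigenvectorUnitary.2),
    CStarRing.norm_mem_unitary_mul _ hA.eigenvectorUnitary.2, l2_opNorm_diagonal]

theorem Matrix.IsHermitian.eigenvalues_le_one {A : Matrix ι ι ℝ} (hA : A.IsHermitian)
    (h : A ≤ 1) (j : ι) : hA.eigenvalues j ≤ 1 :=
  (CFC.le_one_iff A hA.isSelfAdjoint).1 h _ (hA.eigenvalues_mem_spectrum_real j)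

theorem Matrix.IsHermitian.le_one_of_l2_opNorm_le_one {A : Matrix ι ι ℝ} (hA : A.IsHermitian)
    (h : ‖A‖ ≤ 1) : A ≤ 1 := by
  -- `spectrum.norm_le_norm_of_mem` needs `‖1‖ = 1`, which fails for the empty index type
  cases isEmpty_or_nonempty ι
  · exact (Subsingleton.elim A 1).le
  exact (CFC.le_one_iff A hA.isSelfAdjoint).2 fun x hx =>
    (Real.le_norm_self x).trans ((spectrum.norm_le_norm_of_mem hx).trans h)

open Polynomial in
theorem Matrix.l2_opNorm_succ_smul_pow_succ_sub_smul_pow_le_one {A : Matrix ι ι ℝ}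
    (h0 : 0 ≤ A) (h1 : A ≤ 1) (i : ℕ) :
    ‖((i : ℝ) + 1) • A ^ (i + 1) - (i : ℝ) • A ^ i‖ ≤ 1 := by
  have hA := h0.posSemidef.isHermitian
  have hp : ((i : ℝ) + 1) • A ^ (i + 1) - (i : ℝ) • A ^ i
      = aeval A (C ((i : ℝ) + 1) * X ^ (i + 1) - C (i : ℝ) * X ^ i) := by
    simp [Algebra.smul_def]
  rw [hp, hA.l2_opNorm_aeval, pi_norm_le_iff_of_nonneg zero_le_one]
  intro j
  simpa using abs_succ_mul_pow_succ_sub_mul_pow_le_one (h0.posSemidef.eigenvalues_nonneg j)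
    (hA.eigenvalues_le_one h1 j) i

end Spectral

section Mean

variable {ι : Type*} [Fintype ι]

def meanMatrix (ι : Type*) [Fintype ι] : Matrix ι ι ℝ :=
  (Fintype.card ι : ℝ)⁻¹ • of fun _ _ => 1

theorem mul_meanMatrix_of_mulVec_one {Q : Matrix ι ι ℝ} (hQ : Q *ᵥ 1 = 1) :
    Q * meanMatrix ι = meanMatrix ι := by
  ext i j
  have := congrFun hQ i
  simp_all [meanMatrix, mul_apply, mulVec, dotProduct, ← Finset.sum_mul]

theorem meanMatrix_mul_of_one_vecMul {Q : Matrix ι ι ℝ} (hQ : 1 ᵥ* Q = 1) :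
    meanMatrix ι * Q = meanMatrix ι := by
  ext i j
  have := congrFun hQ j
  simp_all [meanMatrix, mul_apply, vecMul, dotProduct, ← Finset.mul_sum]

theorem meanMatrix_mul_self : meanMatrix ι * meanMatrix ι = meanMatrix ι := by
  ext i j
  have : Nonempty ι := ⟨i⟩
  simp [meanMatrix, mul_apply]

theorem isHermitian_meanMatrix : (meanMatrix ι).IsHermitian := by
  ext i j
  simp [meanMatrix]

theorem posSemidef_meanMatrix : (meanMatrix ι).PosSemidef := by
  have := posSemidef_conjTranspose_mul_self (meanMatrix ι)
  rwa [isHermitian_meanMatrix.eq, meanMatrix_mul_self] at this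

variable [DecidableEq ι]

def centeringMatrix (ι : Type*) [Fintype ι] [DecidableEq ι] : Matrix ι ι ℝ :=
  1 - meanMatrix ι

theorem centeringMatrix_mul_self : centeringMatrix ι * centeringMatrix ι = centeringMatrix ι := by
  rw [centeringMatrix, Matrix.mul_sub, Matrix.mul_one, Matrix.sub_mul, Matrix.one_mul,
    meanMatrix_mul_self, sub_self, sub_zero]

theorem isHermitian_centeringMatrix : (centeringMatrix ι).IsHermitian :=
  isHermitian_one.sub isHermitian_meanMatrix

end Mean

section DoublyStochastic

variable {ι : Type*} [Fintype ι] [DecidableEq ι] {Q : Matrix ι ι ℝ}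

theorem Matrix.IsHermitian.mem_Icc_of_mem_doublyStochastic (hQh : Q.IsHermitian)
    (hQ : Q ∈ doublyStochastic ℝ ι) : Q ∈ Set.Icc (-1) 1 := by
  have hnorm := l2_opNorm_le_one_of_mem_doublyStochastic hQ
  refine ⟨neg_le.1 (hQh.neg.le_one_of_l2_opNorm_le_one ?_), hQh.le_one_of_l2_opNorm_le_one hnorm⟩
  rwa [norm_neg]

def stepMatrix (γ : ℝ) (Q : Matrix ι ι ℝ) : Matrix ι ι ℝ :=
  centeringMatrix ι - γ • (1 - Q)

theorem stepMatrix_eq_centeringMatrix_mul_mul (hQ : Q ∈ doublyStochastic ℝ ι) (γ : ℝ) :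
    stepMatrix γ Q = centeringMatrix ι * ((1 - γ) • 1 + γ • Q) * centeringMatrix ι := by
  have hQK := mul_meanMatrix_of_mulVec_one (mulVec_one_of_mem_doublyStochastic hQ)
  have hKQ := meanMatrix_mul_of_one_vecMul (one_vecMul_of_mem_doublyStochastic hQ)
  simp only [stepMatrix, centeringMatrix, Matrix.sub_mul, Matrix.mul_sub, Matrix.add_mul,
    Matrix.mul_add, Matrix.smul_mul, Matrix.mul_smul, Matrix.one_mul, Matrix.mul_one, hQK, hKQ,
    meanMatrix_mul_self]
  rw [sub_self, smul_zero, smul_zero, add_zero, sub_zero]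
  module

theorem stepMatrix_mul_centeringMatrix (hQ : Q ∈ doublyStochastic ℝ ι) (γ : ℝ) :
    stepMatrix γ Q * centeringMatrix ι = stepMatrix γ Q := by
  rw [stepMatrix_eq_centeringMatrix_mul_mul hQ, Matrix.mul_assoc, centeringMatrix_mul_self]

theorem stepMatrix_nonneg (hQh : Q.IsHermitian) (hQ : Q ∈ doublyStochastic ℝ ι) {γ : ℝ}
    (hγ0 : 0 ≤ γ) (hγ1 : γ ≤ 1 / 2) : 0 ≤ stepMatrix γ Q := by
  have hQ1 : (Q + 1).PosSemidef := by
    simpa [le_iff] using (hQh.mem_Icc_of_mem_doublyStochastic hQ).1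
  have hmid : ((1 - γ) • 1 + γ • Q).PosSemidef := by
    convert (PosSemidef.one.smul (by linarith : (0 : ℝ) ≤ 1 - 2 * γ)).add (hQ1.smul hγ0) using 1
    module
  have := hmid.conjTranspose_mul_mul_same (centeringMatrix ι)
  rwa [isHermitian_centeringMatrix.eq, ← stepMatrix_eq_centeringMatrix_mul_mul hQ,
    ← nonneg_iff_posSemidef] at this

theorem stepMatrix_le_one (hQh : Q.IsHermitian) (hQ : Q ∈ doublyStochastic ℝ ι) {γ : ℝ}
    (hγ0 : 0 ≤ γ) : stepMatrix γ Q ≤ 1 := by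
  have hQ1 : (1 - Q).PosSemidef := (hQh.mem_Icc_of_mem_doublyStochastic hQ).2
  have h : 1 - stepMatrix γ Q = meanMatrix ι + γ • (1 - Q) := by
    rw [stepMatrix, centeringMatrix]
    abel
  rw [le_iff, h]
  exact posSemidef_meanMatrix.add (hQ1.smul hγ0)

end DoublyStochastic

theorem Matrix.sub_kronecker {α l m n p : Type*} [Ring α] (A B : Matrix l m α) (C : Matrix n p α) :
    (A - B) ⊗ₖ C = A ⊗ₖ C - B ⊗ₖ C := by
  ext
  simp [sub_mul]

section Kronecker

open scoped ComplexOrder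

variable {𝕜 ι κ : Type*} [RCLike 𝕜] [Fintype ι] [Fintype κ] [DecidableEq κ]

theorem Matrix.kronecker_one_nonneg {A : Matrix ι ι 𝕜} (h : 0 ≤ A) :
    0 ≤ A ⊗ₖ (1 : Matrix κ κ 𝕜) :=
  (h.posSemidef.kronecker PosSemidef.one).nonneg

theorem Matrix.kronecker_one_le_one [DecidableEq ι] {A : Matrix ι ι 𝕜} (h : A ≤ 1) :
    A ⊗ₖ (1 : Matrix κ κ 𝕜) ≤ 1 := by
  rw [le_iff, ← one_kronecker_one, ← sub_kronecker]
  exact (le_iff.1 h).kronecker PosSemidef.one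

end Kronecker

theorem Ibar_eq_kronecker (n d : ℕ) :
    Ibar n d = centeringMatrix (Fin n) ⊗ₖ (1 : Matrix (Fin d) (Fin d) ℝ) := by
  rw [Ibar, avgMat, centeringMatrix, sub_kronecker, one_kronecker_one, meanMatrix,
    Fintype.card_fin]

theorem Ibar_sub_smul_Qprime {n : ℕ} (d : ℕ) (γ : ℝ) (Q : Matrix (Fin n) (Fin n) ℝ) :
    Ibar n d - γ • Qprime Q d = stepMatrix γ Q ⊗ₖ (1 : Matrix (Fin d) (Fin d) ℝ) := by
  rw [Ibar_eq_kronecker, Qprime, ← smul_kronecker, ← sub_kronecker, stepMatrix]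

/-- Let `γ ∈ (0, 1/2]` and set `M := Ī − γ𝐐'`.  Then for every
integer `i ≥ 0`, the spectral norm satisfies `‖(i+1)·M^{i+1}·Ī − i·M^{i}·Ī‖² ≤ 4`. -/
theorem spectral_norm_diff_pow_le_four {n d : ℕ}
    (Q : Matrix (Fin n) (Fin n) ℝ)
    (hQnonneg : ∀ i j, 0 ≤ Q i j)
    (hQrow : ∀ i, ∑ j, Q i j = 1)
    (hQcol : ∀ j, ∑ i, Q i j = 1)
    (hQherm : Q.IsHermitian)
    (γ : ℝ) (hγ0 : 0 < γ) (hγ1 : γ ≤ 1 / 2) :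
    ∀ i : ℕ,
      ‖((i : ℝ) + 1) • ((Ibar n d - γ • Qprime Q d) ^ (i + 1) * Ibar n d)
          - (i : ℝ) • ((Ibar n d - γ • Qprime Q d) ^ i * Ibar n d)‖ ^ 2 ≤ 4 := by
  intro i
  have hQ : Q ∈ doublyStochastic ℝ (Fin n) :=
    mem_doublyStochastic_iff_sum.2 ⟨hQnonneg, hQrow, hQcol⟩
  set M := stepMatrix γ Q ⊗ₖ (1 : Matrix (Fin d) (Fin d) ℝ)
  have hMI : M * Ibar n d = M := by
    rw [Ibar_eq_kronecker, ← mul_kronecker_mul, stepMatrix_mul_centeringMatrix hQ, Matrix.one_mul]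
  have hsucc (k : ℕ) : M ^ (k + 1) * Ibar n d = M ^ (k + 1) := by
    rw [pow_succ, Matrix.mul_assoc, hMI]
  have hlast : (i : ℝ) • (M ^ i * Ibar n d) = (i : ℝ) • M ^ i := by
    rcases i with _ | k
    · simp
    · rw [hsucc]
  have hnorm : ‖((i : ℝ) + 1) • M ^ (i + 1) - (i : ℝ) • M ^ i‖ ≤ 1 :=
    l2_opNorm_succ_smul_pow_succ_sub_smul_pow_le_one
      (kronecker_one_nonneg (stepMatrix_nonneg hQherm hQ hγ0.le hγ1))
      (kronecker_one_le_one (stepMatrix_le_one hQherm hQ hγ0.le)) i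
  rw [Ibar_sub_smul_Qprime, hsucc, hlast]
  exact (pow_le_one₀ (norm_nonneg _) hnorm).trans (by norm_num)
end
end

section
/- Let γ ∈ (0, 1/2] and σ_c ≥ 0. On a probability space, let 𝐱_0 ∈ ℝ^{nd} be deterministic and let {ε_k}_{k≥0} be ℝ^{nd}-valued random vectors satisfying 𝔼[ε_k | σ(ε_0, …, ε_{k−1})] = 0 and 𝔼‖ε_k‖² ≤ n·σ_c² for every k. Define 𝐱_k := (I_{nd} − γ𝐐')𝐱_{k−1} + γ𝐐̂ε_{k−1} for k ≥ 1. Then for every k ≥ 0: 𝔼‖𝐱_k − 𝐱̄_k‖² ≤ (1 − γ(1 − λ₂))^{2k}·‖𝐱_0 − 𝐱̄_0‖² + 2nγσ_c²/(1 − λ₂). -/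
/-!
The consensus error `yₖ = 𝐱ₖ - 𝐱̄ₖ` satisfies `yₖ₊₁ = A yₖ + γ (I - P) 𝐐̂ εₖ`, where
`A = I - γ𝐐'` commutes with the averaging projection `P`. The noise term has zero conditional mean
given `ε₀, …, εₖ₋₁`, so it is orthogonal in `L²` to `A yₖ` and the second moments add up.
Every block of `yₖ` is orthogonal to `1ₙ`, the eigenvector of `Q` for the simple eigenvalue `1`,
and on `1ₙ^⊥` the eigenvalues of `(1 - γ) I + γ Q` lie in `[0, ρ]` with `ρ = 1 - γ(1 - λ₂)`
(using `γ ≤ 1/2` and `λₙ > -1`). The noise has second moment at most `γ² n σ_c²`, since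
`Q - diag(Q)` is substochastic (Schur test) and `I - P` is an orthogonal projection.
Iterating `aₖ₊₁ ≤ ρ² aₖ + γ² n σ_c²` gives the bound, as
`γ² n σ_c² ≤ (1 - ρ²) · 2nγσ_c² / (1 - λ₂)`.
-/

open Matrix Finset MeasureTheory
open scoped Kronecker

noncomputable section

open scoped RealInnerProductSpace

theorem le_pow_mul_add_of_le_mul_add {a : ℕ → ℝ} {q c S : ℝ} (hq : 0 ≤ q) (hS : 0 ≤ S)
    (hcS : c ≤ (1 - q) * S) (h : ∀ k, a (k + 1) ≤ q * a k + c) (k : ℕ) :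
    a k ≤ q ^ k * a 0 + S := by
  induction k with
  | zero => simpa using hS
  | succ k ih =>
    have := mul_le_mul_of_nonneg_left ih hq
    rw [pow_succ]
    linarith [h k]

theorem sq_mul_le_one_sub_sq_mul_div {m γ σ δ : ℝ} (hm : 0 ≤ m) (hδ : 0 < δ)
    (hρ : 0 ≤ 1 - γ * δ) :
    γ ^ 2 * (m * σ ^ 2) ≤ (1 - (1 - γ * δ) ^ 2) * (2 * m * γ * σ ^ 2 / δ) := by
  have h : (1 - (1 - γ * δ) ^ 2) * (2 * m * γ * σ ^ 2 / δ)
      = (2 - γ * δ) * (2 * m * γ ^ 2 * σ ^ 2) := by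
    field_simp; ring
  rw [h]
  nlinarith [show 0 ≤ m * γ ^ 2 * σ ^ 2 by positivity]

theorem OrthonormalBasis.norm_sq_apply_le_of_apply_eq_smul {ι E : Type*} [Fintype ι]
    [NormedAddCommGroup E] [InnerProductSpace ℝ E] (u : OrthonormalBasis ι ℝ E)
    (T : E →ₗ[ℝ] E) (c : ι → ℝ) (hT : ∀ i, T (u i) = c i • u i) {q : ℝ} {v : E}
    (hv : ∀ i, u.repr v i ≠ 0 → c i ^ 2 ≤ q) :
    ‖T v‖ ^ 2 ≤ q * ‖v‖ ^ 2 := by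
  have hTv : T v = u.repr.symm (WithLp.toLp 2 fun i => c i * u.repr v i) := by
    conv_lhs => rw [← u.sum_repr v]
    simp [← u.sum_repr_symm, hT, smul_smul, mul_comm]
  rw [hTv, LinearIsometryEquiv.norm_map, ← u.repr.norm_map v, EuclideanSpace.real_norm_sq_eq,
    EuclideanSpace.real_norm_sq_eq, mul_sum]
  gcongr with i
  by_cases h : u.repr v i = 0
  · simp [h]
  · rw [mul_pow]; exact mul_le_mul_of_nonneg_right (hv i h) (sq_nonneg _)

section Hermitian

variable {ι : Type*} [Fintype ι] [DecidableEq ι] {A : Matrix ι ι ℝ}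

theorem Matrix.IsHermitian.toEuclideanLin_eigenvectorBasis (hA : A.IsHermitian) (i : ι) :
    toEuclideanLin A (hA.eigenvectorBasis i) = hA.eigenvalues i • hA.eigenvectorBasis i :=
  WithLp.ofLp_injective 2 (hA.mulVec_eigenvectorBasis i)

theorem Matrix.IsHermitian.inner_eigenvectorBasis_eq_zero (hA : A.IsHermitian)
    {w : EuclideanSpace ℝ ι} {c : ℝ} (hw : toEuclideanLin A w = c • w) {i : ι}
    (hi : hA.eigenvalues i ≠ c) : ⟪hA.eigenvectorBasis i, w⟫ = 0 := by
  have h := isSymmetric_toEuclideanLin_iff.mpr hA (hA.eigenvectorBasis i) w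
  rw [hA.toEuclideanLin_eigenvectorBasis, hw, real_inner_smul_left, real_inner_smul_right] at h
  exact (mul_eq_mul_right_iff.mp h).resolve_left hi

theorem Matrix.IsHermitian.repr_eigenvectorBasis_eq_zero (hA : A.IsHermitian)
    {w v : EuclideanSpace ℝ ι} {c : ℝ} (hw : toEuclideanLin A w = c • w) (hw0 : w ≠ 0) {i₀ : ι}
    (hc : ∀ i ≠ i₀, hA.eigenvalues i ≠ c) (hv : ⟪w, v⟫ = 0) :
    hA.eigenvectorBasis.repr v i₀ = 0 := by
  set u := hA.eigenvectorBasis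
  have hw_eq : w = ⟪u i₀, w⟫ • u i₀ := by
    conv_lhs => rw [← u.sum_repr' w]
    refine Finset.sum_eq_single i₀ (fun i _ hi => ?_) (by simp)
    rw [hA.inner_eigenvectorBasis_eq_zero hw (hc i hi), zero_smul]
  have hcoef : ⟪u i₀, w⟫ ≠ 0 := fun h => hw0 (by rw [hw_eq, h, zero_smul])
  rw [hw_eq, real_inner_smul_left] at hv
  rw [u.repr_apply_apply]
  exact (mul_eq_zero.mp hv).resolve_left hcoef

end Hermitian

theorem Matrix.norm_sq_toEuclideanLin_le_of_sum_le_one {ι κ : Type*} [Fintype ι] [Fintype κ]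
    [DecidableEq ι] {M : Matrix κ ι ℝ} (h0 : ∀ i j, 0 ≤ M i j) (hrow : ∀ i, ∑ j, M i j ≤ 1)
    (hcol : ∀ j, ∑ i, M i j ≤ 1) (v : EuclideanSpace ℝ ι) :
    ‖toEuclideanLin M v‖ ^ 2 ≤ ‖v‖ ^ 2 := by
  rw [EuclideanSpace.real_norm_sq_eq, EuclideanSpace.real_norm_sq_eq]
  calc ∑ i, (toEuclideanLin M v i) ^ 2
      ≤ ∑ i, ∑ j, M i j * v j ^ 2 := by
        gcongr with i
        have hcs : (∑ j, M i j * v j) ^ 2 ≤ (∑ j, M i j) * ∑ j, M i j * v j ^ 2 :=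
          sum_sq_le_sum_mul_sum_of_sq_le_mul _ (fun j _ => h0 i j)
            (fun j _ => mul_nonneg (h0 i j) (sq_nonneg _)) (fun j _ => (by ring : _ = _).le)
        calc (toEuclideanLin M v i) ^ 2 = (∑ j, M i j * v j) ^ 2 := rfl
          _ ≤ _ := hcs.trans (mul_le_of_le_one_left
              (sum_nonneg fun j _ => mul_nonneg (h0 i j) (sq_nonneg _)) (hrow i))
    _ = ∑ j, (∑ i, M i j) * v j ^ 2 := by rw [sum_comm]; simp only [sum_mul]
    _ ≤ ∑ j, v j ^ 2 := by
        gcongr with j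
        exact mul_le_of_le_one_left (sq_nonneg _) (hcol j)

theorem Matrix.norm_sq_toEuclideanLin_sub_diagonal_le {ι : Type*} [Fintype ι] [DecidableEq ι]
    {Q : Matrix ι ι ℝ} (hQnonneg : ∀ i j, 0 ≤ Q i j) (hQrow : ∀ i, ∑ j, Q i j = 1)
    (hQcol : ∀ j, ∑ i, Q i j = 1) (v : EuclideanSpace ℝ ι) :
    ‖toEuclideanLin (Q - diagonal fun i => Q i i) v‖ ^ 2 ≤ ‖v‖ ^ 2 := by
  refine norm_sq_toEuclideanLin_le_of_sum_le_one (fun i j => ?_) (fun i => ?_) (fun j => ?_) v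
  · by_cases h : i = j
    · subst h; simp
    · simpa [h] using hQnonneg i j
  · simpa [sum_sub_distrib, diagonal_apply, hQrow] using hQnonneg i i
  · simpa [sum_sub_distrib, diagonal_apply, hQcol] using hQnonneg j j

def lazyMat {ι : Type*} [Fintype ι] [DecidableEq ι] (γ : ℝ) (Q : Matrix ι ι ℝ) :
    Matrix ι ι ℝ :=
  1 - γ • (1 - Q)

theorem Commute.lazyMat_left {ι : Type*} [Fintype ι] [DecidableEq ι] {Q M : Matrix ι ι ℝ}
    (h : Commute Q M) (γ : ℝ) : Commute (lazyMat γ Q) M :=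
  (Commute.one_left M).sub_left (((Commute.one_left M).sub_left h).smul_left γ)

theorem norm_sq_toEuclideanLin_lazyMat_le {n : ℕ} (hn : 1 < n) {Q : Matrix (Fin n) (Fin n) ℝ}
    (hQherm : Q.IsHermitian) (hQrow : ∀ i, ∑ j, Q i j = 1)
    (hQsorted : ∀ i j : Fin n, i ≤ j → hQherm.eigenvalues j ≤ hQherm.eigenvalues i)
    (hQeig2 : hQherm.eigenvalues ⟨1, hn⟩ < 1)
    (hQeign : -1 < hQherm.eigenvalues ⟨n - 1, by omega⟩)
    {γ : ℝ} (hγ0 : 0 < γ) (hγ1 : γ ≤ 1 / 2) {v : EuclideanSpace ℝ (Fin n)} (hv : ∑ i, v i = 0) :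
    ‖toEuclideanLin (lazyMat γ Q) v‖ ^ 2
      ≤ (1 - γ * (1 - hQherm.eigenvalues ⟨1, hn⟩)) ^ 2 * ‖v‖ ^ 2 := by
  set eig := hQherm.eigenvalues
  let ones : EuclideanSpace ℝ (Fin n) := WithLp.toLp 2 fun _ => 1
  have hones : toEuclideanLin Q ones = (1 : ℝ) • ones := by
    ext i; simpa [toLpLin_apply, mulVec, dotProduct, ones] using hQrow i
  have hones0 : ones ≠ 0 := fun h => by simpa [ones] using congr($h ⟨0, by omega⟩)
  have hv' : ⟪ones, v⟫ = 0 := by simpa [ones, PiLp.inner_apply] using hv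
  have hle_one : ∀ j : Fin n, j ≠ ⟨0, by omega⟩ → eig j ≤ eig ⟨1, hn⟩ := fun j hj =>
    hQsorted _ _ (by rw [Fin.le_def]; have := Fin.val_ne_of_ne hj; simp at this ⊢; omega)
  have hrepr0 : hQherm.eigenvectorBasis.repr v ⟨0, by omega⟩ = 0 :=
    hQherm.repr_eigenvectorBasis_eq_zero hones hones0
      (fun j hj => ((hle_one j hj).trans_lt hQeig2).ne) hv'
  refine hQherm.eigenvectorBasis.norm_sq_apply_le_of_apply_eq_smul _
    (fun i => 1 - γ * (1 - eig i)) (fun i => ?_) (fun i hi => ?_)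
  · simp [lazyMat, hQherm.toEuclideanLin_eigenvectorBasis, eig, mul_sub, sub_smul, smul_sub,
      smul_smul]
  · have h1 : eig i ≤ eig ⟨1, hn⟩ := hle_one i (by rintro rfl; exact hi hrepr0)
    have h2 : eig ⟨n - 1, by omega⟩ ≤ eig i := hQsorted _ _ (by rw [Fin.le_def]; simp; omega)
    exact pow_le_pow_left₀ (by nlinarith) (by nlinarith) 2

theorem LinearMap.IsSymmetric.norm_sub_apply_le {E : Type*} [NormedAddCommGroup E]
    [InnerProductSpace ℝ E] {T : E →ₗ[ℝ] E} (hT : T.IsSymmetric) (hTT : ∀ v, T (T v) = T v)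
    (v : E) : ‖v - T v‖ ≤ ‖v‖ := by
  have horth : ⟪v - T v, T v⟫ = 0 := by rw [← hT, map_sub, hTT, sub_self, inner_zero_left]
  have h := norm_add_sq_eq_norm_sq_add_norm_sq_real horth
  rw [sub_add_cancel] at h
  exact le_of_sq_le_sq (by nlinarith [sq_nonneg ‖T v‖]) (norm_nonneg v)

section Kronecker

variable {ι κ : Type*}

def sliceAt (z : EuclideanSpace ℝ (ι × κ)) (a : κ) : EuclideanSpace ℝ ι :=
  WithLp.toLp 2 fun i => z (i, a)

theorem sliceAt_sub (z w : EuclideanSpace ℝ (ι × κ)) (a : κ) :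
    sliceAt (z - w) a = sliceAt z a - sliceAt w a := rfl

theorem sliceAt_toEuclideanLin_kronecker_one [Fintype ι] [Fintype κ] [DecidableEq ι]
    [DecidableEq κ] (M : Matrix ι ι ℝ) (z : EuclideanSpace ℝ (ι × κ)) (a : κ) :
    sliceAt (toEuclideanLin (M ⊗ₖ (1 : Matrix κ κ ℝ)) z) a = toEuclideanLin M (sliceAt z a) := by
  ext i
  simp [sliceAt, toLpLin_apply, mulVec, dotProduct, Fintype.sum_prod_type, one_apply]

theorem norm_sq_eq_sum_norm_sq_sliceAt [Fintype ι] [Fintype κ]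
    (z : EuclideanSpace ℝ (ι × κ)) :
    ‖z‖ ^ 2 = ∑ a, ‖sliceAt z a‖ ^ 2 := by
  simp [sliceAt, EuclideanSpace.real_norm_sq_eq, Fintype.sum_prod_type_right]

theorem norm_sq_toEuclideanLin_kronecker_one_le [Fintype ι] [Fintype κ] [DecidableEq ι]
    [DecidableEq κ] {M : Matrix ι ι ℝ} {q : ℝ} {z : EuclideanSpace ℝ (ι × κ)}
    (h : ∀ a, ‖toEuclideanLin M (sliceAt z a)‖ ^ 2 ≤ q * ‖sliceAt z a‖ ^ 2) :
    ‖toEuclideanLin (M ⊗ₖ (1 : Matrix κ κ ℝ)) z‖ ^ 2 ≤ q * ‖z‖ ^ 2 := by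
  rw [norm_sq_eq_sum_norm_sq_sliceAt, norm_sq_eq_sum_norm_sq_sliceAt, mul_sum]
  gcongr with a
  rw [sliceAt_toEuclideanLin_kronecker_one]
  exact h a

theorem Commute.kronecker_one [Fintype ι] [Fintype κ] [DecidableEq κ] {M N : Matrix ι ι ℝ}
    (h : Commute M N) :
    Commute (M ⊗ₖ (1 : Matrix κ κ ℝ)) (N ⊗ₖ (1 : Matrix κ κ ℝ)) := by
  rw [Commute, SemiconjBy, ← mul_kronecker_mul, ← mul_kronecker_mul, h.eq]

end Kronecker

def meanMat (n : ℕ) : Matrix (Fin n) (Fin n) ℝ := (n : ℝ)⁻¹ • of fun _ _ => 1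

section Consensus

variable {n d : ℕ}

theorem avgMat_eq_meanMat_kronecker_one :
    avgMat n d = meanMat n ⊗ₖ (1 : Matrix (Fin d) (Fin d) ℝ) :=
  rfl

theorem one_sub_smul_Qprime (γ : ℝ) (Q : Matrix (Fin n) (Fin n) ℝ) :
    1 - γ • Qprime Q d = lazyMat γ Q ⊗ₖ (1 : Matrix (Fin d) (Fin d) ℝ) := by
  ext ⟨i, a⟩ ⟨j, b⟩
  by_cases hij : i = j <;> by_cases hab : a = b <;>
    simp [lazyMat, Qprime, one_apply, hij, hab]

theorem toEuclideanLin_meanMat_apply (v : EuclideanSpace ℝ (Fin n)) (i : Fin n) :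
    toEuclideanLin (meanMat n) v i = (n : ℝ)⁻¹ * ∑ j, v j := by
  simp [meanMat, toLpLin_apply, mulVec, dotProduct, mul_sum]

theorem sum_sub_toEuclideanLin_meanMat (hn : n ≠ 0) (v : EuclideanSpace ℝ (Fin n)) :
    ∑ i, (v - toEuclideanLin (meanMat n) v) i = 0 := by
  simp [toEuclideanLin_meanMat_apply, sum_sub_distrib, hn]

theorem meanMat_mul_self (hn : n ≠ 0) : meanMat n * meanMat n = meanMat n := by
  ext i j
  simp [meanMat, mul_apply, hn]

theorem meanMat_isHermitian : (meanMat n).IsHermitian := by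
  ext i j
  simp [meanMat]

theorem commute_meanMat {Q : Matrix (Fin n) (Fin n) ℝ} (hQrow : ∀ i, ∑ j, Q i j = 1)
    (hQcol : ∀ j, ∑ i, Q i j = 1) : Commute Q (meanMat n) := by
  ext i j
  simp [meanMat, mul_apply, ← mul_sum, ← sum_mul, hQrow, hQcol]

theorem norm_sub_toEuclideanLin_avgMat_le (hn : n ≠ 0)
    (z : EuclideanSpace ℝ (Fin n × Fin d)) :
    ‖z - toEuclideanLin (avgMat n d) z‖ ≤ ‖z‖ := by
  refine LinearMap.IsSymmetric.norm_sub_apply_le ?_ (fun v => ?_) z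
  · rw [isSymmetric_toEuclideanLin_iff, avgMat_eq_meanMat_kronecker_one]
    rw [IsHermitian, conjTranspose_kronecker, meanMat_isHermitian.eq, conjTranspose_one]
  · rw [← LinearMap.comp_apply, ← toLpLin_mul_same, avgMat_eq_meanMat_kronecker_one,
      ← mul_kronecker_mul, meanMat_mul_self hn, one_mul]

theorem sum_sliceAt_sub_toEuclideanLin_avgMat (hn : n ≠ 0)
    (z : EuclideanSpace ℝ (Fin n × Fin d)) (a : Fin d) :
    ∑ i, sliceAt (z - toEuclideanLin (avgMat n d) z) a i = 0 := by
  rw [sliceAt_sub, avgMat_eq_meanMat_kronecker_one, sliceAt_toEuclideanLin_kronecker_one]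
  exact sum_sub_toEuclideanLin_meanMat hn _

theorem norm_sq_toEuclideanLin_Qhat_le {Q : Matrix (Fin n) (Fin n) ℝ}
    (hQnonneg : ∀ i j, 0 ≤ Q i j) (hQrow : ∀ i, ∑ j, Q i j = 1) (hQcol : ∀ j, ∑ i, Q i j = 1)
    (v : EuclideanSpace ℝ (Fin n × Fin d)) :
    ‖toEuclideanLin (Qhat Q d) v‖ ^ 2 ≤ ‖v‖ ^ 2 := by
  rw [← one_mul (‖v‖ ^ 2)]
  exact norm_sq_toEuclideanLin_kronecker_one_le fun a => by
    rw [one_mul]; exact norm_sq_toEuclideanLin_sub_diagonal_le hQnonneg hQrow hQcol (sliceAt v a)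

theorem norm_sq_sub_toEuclideanLin_avgMat_smul_Qhat_le (hn : n ≠ 0)
    {Q : Matrix (Fin n) (Fin n) ℝ} (hQnonneg : ∀ i j, 0 ≤ Q i j) (hQrow : ∀ i, ∑ j, Q i j = 1)
    (hQcol : ∀ j, ∑ i, Q i j = 1) (γ : ℝ) (v : EuclideanSpace ℝ (Fin n × Fin d)) :
    ‖γ • toEuclideanLin (Qhat Q d) v
        - toEuclideanLin (avgMat n d) (γ • toEuclideanLin (Qhat Q d) v)‖ ^ 2
      ≤ γ ^ 2 * ‖v‖ ^ 2 := calc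
  _ ≤ ‖γ • toEuclideanLin (Qhat Q d) v‖ ^ 2 :=
    pow_le_pow_left₀ (norm_nonneg _) (norm_sub_toEuclideanLin_avgMat_le hn _) 2
  _ = γ ^ 2 * ‖toEuclideanLin (Qhat Q d) v‖ ^ 2 := by
    rw [norm_smul, mul_pow, Real.norm_eq_abs, sq_abs]
  _ ≤ γ ^ 2 * ‖v‖ ^ 2 := by
    gcongr γ ^ 2 * ?_; exact norm_sq_toEuclideanLin_Qhat_le hQnonneg hQrow hQcol v

end Consensus

section Stochastic

variable {Ω E : Type*} {m mΩ : MeasurableSpace Ω} {μ : Measure Ω}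
  [NormedAddCommGroup E] [InnerProductSpace ℝ E]

theorem MeasureTheory.MemLp.integrable_inner {f g : Ω → E} (hf : MemLp f 2 μ)
    (hg : MemLp g 2 μ) : Integrable (fun ω => ⟪f ω, g ω⟫) μ :=
  memLp_one_iff_integrable.mp <| hf.of_bilin (fun a b => ⟪a, b⟫) 1 hg (hf.1.inner hg.1)
    (ae_of_all _ fun ω => by
      simpa [← NNReal.coe_le_coe] using abs_real_inner_le_norm (f ω) (g ω))

variable [CompleteSpace E]

theorem integral_inner_eq_zero_of_condExp_eq_zero [IsFiniteMeasure μ] (hm : m ≤ mΩ)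
    {f g : Ω → E} (hf : StronglyMeasurable[m] f) (hf2 : MemLp f 2 μ) (hg2 : MemLp g 2 μ)
    (hg : μ[g|m] =ᵐ[μ] 0) : ∫ ω, ⟪f ω, g ω⟫ ∂μ = 0 := by
  have hpull := condExp_bilin_of_stronglyMeasurable_left (innerSL ℝ) hf
    (hf2.integrable_inner hg2) (hg2.integrable one_le_two)
  calc ∫ ω, ⟪f ω, g ω⟫ ∂μ = ∫ ω, μ[fun ω => ⟪f ω, g ω⟫|m] ω ∂μ :=
        (integral_condExp hm).symm
    _ = ∫ ω, ⟪f ω, (μ[g|m]) ω⟫ ∂μ := integral_congr_ae hpull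
    _ = 0 := by
      rw [integral_congr_ae (g := fun _ => (0 : ℝ)) (hg.mono fun ω h => by simp [h])]
      simp

theorem integral_norm_sq_add_of_condExp_eq_zero [IsFiniteMeasure μ] (hm : m ≤ mΩ)
    {f g : Ω → E} (hf : StronglyMeasurable[m] f) (hf2 : MemLp f 2 μ) (hg2 : MemLp g 2 μ)
    (hg : μ[g|m] =ᵐ[μ] 0) :
    ∫ ω, ‖f ω + g ω‖ ^ 2 ∂μ = ∫ ω, ‖f ω‖ ^ 2 ∂μ + ∫ ω, ‖g ω‖ ^ 2 ∂μ := by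
  have hf2' := hf2.integrable_norm_pow two_ne_zero
  have hg2' := hg2.integrable_norm_pow two_ne_zero
  have hfg := (hf2.integrable_inner hg2).const_mul 2
  have hsum : Integrable (fun ω => ‖f ω‖ ^ 2 + 2 * ⟪f ω, g ω⟫) μ := hf2'.add hfg
  simp_rw [norm_add_sq_real]
  rw [integral_add hsum hg2', integral_add hf2' hfg, integral_const_mul,
    integral_inner_eq_zero_of_condExp_eq_zero hm hf hf2 hg2 hg, mul_zero, add_zero]

theorem condExp_comp_eq_zero (T : E →L[ℝ] E) {f : Ω → E} (hf : Integrable f μ)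
    (h : μ[f|m] =ᵐ[μ] 0) : μ[fun ω => T (f ω)|m] =ᵐ[μ] 0 :=
  (T.comp_condExp_comm hf).symm.trans (h.mono fun ω hω => by simp [hω])

end Stochastic

section NoiseHistory

variable {Ω E : Type*} {mΩ : MeasurableSpace Ω} [MeasurableSpace E]

abbrev noiseHistory (ε : ℕ → Ω → E) (k : ℕ) : MeasurableSpace Ω :=
  ⨆ i ∈ Finset.range k, MeasurableSpace.comap (ε i) inferInstance

theorem noiseHistory_le {ε : ℕ → Ω → E} (hε : ∀ k, Measurable (ε k)) (k : ℕ) :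
    noiseHistory ε k ≤ mΩ :=
  iSup₂_le fun i _ => (hε i).comap_le

theorem noiseHistory_mono (ε : ℕ → Ω → E) : Monotone (noiseHistory ε) :=
  fun _ _ hkl => biSup_mono fun _ hi => mem_range.mpr ((mem_range.mp hi).trans_le hkl)

theorem measurable_noiseHistory_succ (ε : ℕ → Ω → E) (k : ℕ) :
    Measurable[noiseHistory ε (k + 1)] (ε k) :=
  measurable_iff_comap_le.mpr <| le_iSup₂ (f := fun i (_ : i ∈ range (k + 1)) =>
    MeasurableSpace.comap (ε i) inferInstance) k (self_mem_range_succ k)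

end NoiseHistory

section NoisyRecursion

variable {Ω E : Type*} {mΩ : MeasurableSpace Ω} {μ : Measure Ω}
  [NormedAddCommGroup E] [NormedSpace ℝ E]
  {A C : E →L[ℝ] E} {x ε : ℕ → Ω → E} {x0 : E}

theorem memLp_noisyIterate [IsFiniteMeasure μ] (hε2 : ∀ k, MemLp (ε k) 2 μ)
    (hx0 : x 0 = fun _ => x0) (hrec : ∀ k, x (k + 1) = fun ω => A (x k ω) + C (ε k ω))
    (k : ℕ) : MemLp (x k) 2 μ := by
  induction k with
  | zero => rw [hx0]; exact memLp_const x0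
  | succ k ih => rw [hrec k]; exact (A.comp_memLp' ih).add (C.comp_memLp' (hε2 k))

theorem stronglyMeasurable_noisyIterate [MeasurableSpace E] [BorelSpace E]
    [SecondCountableTopology E] (hx0 : x 0 = fun _ => x0)
    (hrec : ∀ k, x (k + 1) = fun ω => A (x k ω) + C (ε k ω)) (k : ℕ) :
    StronglyMeasurable[noiseHistory ε k] (x k) := by
  induction k with
  | zero => rw [hx0]; exact stronglyMeasurable_const
  | succ k ih =>
    rw [hrec k]
    exact (A.continuous.comp_stronglyMeasurable (ih.mono (noiseHistory_mono ε k.le_succ))).add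
      (C.continuous.comp_stronglyMeasurable (measurable_noiseHistory_succ ε k).stronglyMeasurable)

end NoisyRecursion

section ConsensusError

variable {Ω E : Type*} {mΩ : MeasurableSpace Ω} {μ : Measure Ω} [NormedAddCommGroup E]
  [InnerProductSpace ℝ E] [CompleteSpace E] [MeasurableSpace E] [BorelSpace E]
  [SecondCountableTopology E] {A C P : E →L[ℝ] E} {x ε : ℕ → Ω → E} {x0 : E} {q r v : ℝ}

theorem integral_norm_sq_sub_proj_noisyIterate_succ_le [IsFiniteMeasure μ]
    (hx0 : x 0 = fun _ => x0) (hrec : ∀ k, x (k + 1) = fun ω => A (x k ω) + C (ε k ω))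
    (hε : ∀ k, Measurable (ε k)) (hε2 : ∀ k, MemLp (ε k) 2 μ)
    (hεmean : ∀ k, μ[ε k | noiseHistory ε k] =ᵐ[μ] 0)
    (hAP : Commute A P) (hA : ∀ z, ‖A (z - P z)‖ ^ 2 ≤ q * ‖z - P z‖ ^ 2)
    (hC : ∀ e, ‖C e - P (C e)‖ ^ 2 ≤ r * ‖e‖ ^ 2) (hr : 0 ≤ r)
    (hεvar : ∀ k, ∫ ω, ‖ε k ω‖ ^ 2 ∂μ ≤ v) (k : ℕ) :
    ∫ ω, ‖x (k + 1) ω - P (x (k + 1) ω)‖ ^ 2 ∂μ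
      ≤ q * ∫ ω, ‖x k ω - P (x k ω)‖ ^ 2 ∂μ + r * v := by
  let T : E →L[ℝ] E := C - P.comp C
  have hstep : ∀ ω, x (k + 1) ω - P (x (k + 1) ω) = A (x k ω - P (x k ω)) + T (ε k ω) := by
    intro ω
    have hPA : P (A (x k ω)) = A (P (x k ω)) := congr($hAP.eq.symm (x k ω))
    simp only [hrec k, map_add, map_sub, hPA, T, _root_.sub_apply, ContinuousLinearMap.comp_apply]
    abel
  have hx2 := memLp_noisyIterate hε2 hx0 hrec k
  have hy2 : MemLp (fun ω => x k ω - P (x k ω)) 2 μ := hx2.sub (P.comp_memLp' hx2)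
  have hxm := stronglyMeasurable_noisyIterate hx0 hrec k
  have hy : StronglyMeasurable[noiseHistory ε k] fun ω => x k ω - P (x k ω) :=
    hxm.sub (P.continuous.comp_stronglyMeasurable hxm)
  simp only [hstep]
  rw [integral_norm_sq_add_of_condExp_eq_zero (f := fun ω => A (x k ω - P (x k ω)))
    (g := fun ω => T (ε k ω)) (noiseHistory_le hε k)
    (A.continuous.comp_stronglyMeasurable hy) (A.comp_memLp' hy2) (T.comp_memLp' (hε2 k))
    (condExp_comp_eq_zero T ((hε2 k).integrable one_le_two) (hεmean k)), ← integral_const_mul]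
  gcongr ?_ + ?_
  · exact integral_mono ((A.comp_memLp' hy2).integrable_norm_pow two_ne_zero)
      ((hy2.integrable_norm_pow two_ne_zero).const_mul q) fun ω => hA (x k ω)
  · calc ∫ ω, ‖T (ε k ω)‖ ^ 2 ∂μ ≤ ∫ ω, r * ‖ε k ω‖ ^ 2 ∂μ :=
          integral_mono_of_nonneg (ae_of_all _ fun _ => by positivity)
            (((hε2 k).integrable_norm_pow two_ne_zero).const_mul r) (ae_of_all _ fun ω => hC _)
      _ ≤ r * v := by rw [integral_const_mul]; gcongr; exact hεvar k

theorem integral_norm_sq_sub_proj_noisyIterate_le [IsProbabilityMeasure μ] {S : ℝ}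
    (hx0 : x 0 = fun _ => x0) (hrec : ∀ k, x (k + 1) = fun ω => A (x k ω) + C (ε k ω))
    (hε : ∀ k, Measurable (ε k)) (hε2 : ∀ k, MemLp (ε k) 2 μ)
    (hεmean : ∀ k, μ[ε k | noiseHistory ε k] =ᵐ[μ] 0)
    (hAP : Commute A P) (hA : ∀ z, ‖A (z - P z)‖ ^ 2 ≤ q * ‖z - P z‖ ^ 2)
    (hC : ∀ e, ‖C e - P (C e)‖ ^ 2 ≤ r * ‖e‖ ^ 2) (hr : 0 ≤ r)
    (hεvar : ∀ k, ∫ ω, ‖ε k ω‖ ^ 2 ∂μ ≤ v)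
    (hq : 0 ≤ q) (hS : 0 ≤ S) (hrvS : r * v ≤ (1 - q) * S) (k : ℕ) :
    ∫ ω, ‖x k ω - P (x k ω)‖ ^ 2 ∂μ ≤ q ^ k * ‖x0 - P x0‖ ^ 2 + S := by
  refine (le_pow_mul_add_of_le_mul_add (a := fun k => ∫ ω, ‖x k ω - P (x k ω)‖ ^ 2 ∂μ)
    hq hS hrvS (integral_norm_sq_sub_proj_noisyIterate_succ_le hx0 hrec hε hε2 hεmean hAP hA
      hC hr hεvar) k).trans_eq ?_
  simp [hx0]

end ConsensusError

/-- **noisy distributed averaging.**  With martingale-difference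
communication noise of variance at most `n·σ_c²`, the expected consensus error of the
noisy averaging recursion `𝐱_k = (I − γ𝐐')𝐱_{k−1} + γ𝐐̂ε_{k−1}` satisfies
`𝔼‖𝐱_k − 𝐱̄_k‖² ≤ (1 − γ(1 − λ₂))^{2k}·‖𝐱_0 − 𝐱̄_0‖² + 2nγσ_c²/(1 − λ₂)`. -/
theorem noisy_averaging_consensus_bound {n d : ℕ} (hn : 2 ≤ n)
    (Q : Matrix (Fin n) (Fin n) ℝ)
    (hQnonneg : ∀ i j, 0 ≤ Q i j)
    (hQrow : ∀ i, ∑ j, Q i j = 1)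
    (hQcol : ∀ j, ∑ i, Q i j = 1)
    (hQherm : Q.IsHermitian)
    (hQsorted : ∀ i j : Fin n, i ≤ j → hQherm.eigenvalues j ≤ hQherm.eigenvalues i)
    (hQeig2 : hQherm.eigenvalues ⟨1, by omega⟩ < 1)
    (hQeign : -1 < hQherm.eigenvalues ⟨n - 1, by omega⟩)
    (γ σc : ℝ) (hγ0 : 0 < γ) (hγ1 : γ ≤ 1 / 2)
    {Ω : Type*} [MeasurableSpace Ω] (μ : Measure Ω) [IsProbabilityMeasure μ]
    (x ε : ℕ → Ω → EuclideanSpace ℝ (Fin n × Fin d))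
    (x0 : EuclideanSpace ℝ (Fin n × Fin d))
    (hx0 : x 0 = fun _ => x0)
    (hεmeas : ∀ k, Measurable (ε k))
    (hεL2 : ∀ k, MemLp (ε k) 2 μ)
    (hεmean : ∀ k, μ[ε k | ⨆ i ∈ Finset.range k,
        MeasurableSpace.comap (ε i) inferInstance] =ᵐ[μ] 0)
    (hεvar : ∀ k, ∫ ω, ‖ε k ω‖ ^ 2 ∂μ ≤ (n : ℝ) * σc ^ 2)
    (hxrec : ∀ k, x (k + 1) = fun ω =>
      Matrix.toEuclideanLin
        ((1 : Matrix (Fin n × Fin d) (Fin n × Fin d) ℝ) - γ • Qprime Q d) (x k ω)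
        + γ • Matrix.toEuclideanLin (Qhat Q d) (ε k ω)) :
    ∀ k : ℕ,
      ∫ ω, ‖x k ω - Matrix.toEuclideanLin (avgMat n d) (x k ω)‖ ^ 2 ∂μ
        ≤ (1 - γ * (1 - hQherm.eigenvalues ⟨1, by omega⟩)) ^ (2 * k)
            * ‖x0 - Matrix.toEuclideanLin (avgMat n d) x0‖ ^ 2
          + 2 * n * γ * σc ^ 2 / (1 - hQherm.eigenvalues ⟨1, by omega⟩) := by
  intro k
  set ρ := 1 - γ * (1 - hQherm.eigenvalues ⟨1, by omega⟩)
  have hn0 : n ≠ 0 := by omega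
  have hρ0 : 0 ≤ ρ := by
    have := hQsorted ⟨1, by omega⟩ ⟨n - 1, by omega⟩ (by rw [Fin.le_def]; simp; omega)
    nlinarith
  have hgap : 0 < 1 - hQherm.eigenvalues ⟨1, by omega⟩ := by linarith
  rw [pow_mul]
  refine integral_norm_sq_sub_proj_noisyIterate_le
    (A := toEuclideanCLM (𝕜 := ℝ) (lazyMat γ Q ⊗ₖ 1))
    (C := γ • toEuclideanCLM (𝕜 := ℝ) (Qhat Q d)) (P := toEuclideanCLM (𝕜 := ℝ) (avgMat n d))
    hx0 (fun k => by rw [hxrec k, one_sub_smul_Qprime]; rfl) hεmeas hεL2 hεmean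
    (((commute_meanMat hQrow hQcol).lazyMat_left γ).kronecker_one.map toEuclideanCLM)
    (fun z => norm_sq_toEuclideanLin_kronecker_one_le fun a =>
      norm_sq_toEuclideanLin_lazyMat_le hn hQherm hQrow hQsorted hQeig2 hQeign hγ0 hγ1
        (sum_sliceAt_sub_toEuclideanLin_avgMat hn0 z a))
    (norm_sq_sub_toEuclideanLin_avgMat_smul_Qhat_le hn0 hQnonneg hQrow hQcol γ) (sq_nonneg γ)
    hεvar (sq_nonneg ρ) (by positivity) (sq_mul_le_one_sub_sq_mul_div (Nat.cast_nonneg n) hgap hρ0)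
    k
end
end

section
/- Let f_1, …, f_n : ℝ^d → ℝ each be differentiable, convex and L-smooth, and let x* ∈ ℝ^d satisfy Σ_{i=1}^n ∇f_i(x*) = 0. Then for any points x_1, …, x_n ∈ ℝ^d, with x̄ := (1/n)·Σᵢ x_i: ‖(1/n)·Σ_{i=1}^n ∇f_i(x_i)‖² ≤ (2L²/n)·Σ_{i=1}^n ‖x̄ − x_i‖² + (4L/n)·Σ_{i=1}^n ( f_i(x̄) − f_i(x*) ). -/
/-!
Split the average gradient as the average of `∇fᵢ(xᵢ) - ∇fᵢ(x̄)` plus the average of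
`∇fᵢ(x̄) - ∇fᵢ(x*)` (the `∇fᵢ(x*)` sum to zero) and use `‖a + b‖² ≤ 2‖a‖² + 2‖b‖²` and Jensen's
inequality for `‖·‖²`. The first average is controlled by `L`-smoothness alone. For the second,
the gradient of a convex `L`-smooth function is co-coercive,
`‖∇f x - ∇f y‖² ≤ 2L (f x - f y - ⟪∇f y, x - y⟫)`, and the Bregman terms on the right sum to
`Σᵢ (fᵢ(x̄) - fᵢ(x*))` because `Σᵢ ∇fᵢ(x*) = 0`.
-/

open Finset Set InnerProductSpace

section Smooth

variable {E : Type*} [NormedAddCommGroup E] [InnerProductSpace ℝ E] [CompleteSpace E]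
  {f : E → ℝ} {L : ℝ}

theorem hasDerivAt_comp_lineMap {x y : E} {t : ℝ}
    (hf : DifferentiableAt ℝ f (AffineMap.lineMap x y t)) :
    HasDerivAt (fun s => f (AffineMap.lineMap x y s))
      ⟪gradient f (AffineMap.lineMap x y t), y - x⟫_ℝ t := by
  have h := hf.hasGradientAt.hasFDerivAt.comp_hasDerivAt t AffineMap.hasDerivAt_lineMap
  simp only [toDual_apply_apply] at h
  exact h

theorem ConvexOn.inner_gradient_le_sub (hconv : ConvexOn ℝ univ f) {x : E}
    (hf : DifferentiableAt ℝ f x) (y : E) :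
    ⟪gradient f x, y - x⟫_ℝ ≤ f y - f x := by
  have hline := (hconv.comp_affineMap (AffineMap.lineMap x y)).le_slope_of_hasDerivAt
    (mem_univ 0) (mem_univ 1) one_pos
    (hasDerivAt_comp_lineMap (t := 0) (by simpa using hf))
  simpa [slope_def_field] using hline

theorem le_add_inner_gradient_add_sq (hf : Differentiable ℝ f)
    (hsmooth : ∀ x y, ‖gradient f x - gradient f y‖ ≤ L * ‖x - y‖) (x y : E) :
    f y ≤ f x + ⟪gradient f x, y - x⟫_ℝ + L / 2 * ‖y - x‖ ^ 2 := by
  set v := y - x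
  have hB (t : ℝ) : HasDerivAt (fun t => f x + t * ⟪gradient f x, v⟫_ℝ + L / 2 * t ^ 2 * ‖v‖ ^ 2)
      (⟪gradient f x, v⟫_ℝ + L * t * ‖v‖ ^ 2) t := by
    have := (((hasDerivAt_id t).mul_const ⟪gradient f x, v⟫_ℝ).const_add (f x)).add
      (((hasDerivAt_pow 2 t).const_mul (L / 2)).mul_const (‖v‖ ^ 2))
    exact this.congr_deriv (by push_cast; ring)
  have hderiv_le (t : ℝ) (ht : 0 ≤ t) :
      ⟪gradient f (AffineMap.lineMap x y t), v⟫_ℝ ≤ ⟪gradient f x, v⟫_ℝ + L * t * ‖v‖ ^ 2 := by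
    have hlip := hsmooth (AffineMap.lineMap x y t) x
    rw [show AffineMap.lineMap x y t - x = t • v from AffineMap.lineMap_vsub_left x y t,
      norm_smul, Real.norm_of_nonneg ht] at hlip
    have := real_inner_le_norm (gradient f (AffineMap.lineMap x y t) - gradient f x) v
    rw [inner_sub_left] at this
    nlinarith [mul_le_mul_of_nonneg_right hlip (norm_nonneg v)]
  have := image_le_of_deriv_right_le_deriv_boundary (a := 0) (b := 1)
    (f := fun s => f (AffineMap.lineMap x y s))
    (fun t _ => (hasDerivAt_comp_lineMap (hf _)).continuousAt.continuousWithinAt)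
    (fun t _ => (hasDerivAt_comp_lineMap (hf _)).hasDerivWithinAt)
    (by simp) (fun t _ => (hB t).continuousAt.continuousWithinAt)
    (fun t _ => (hB t).hasDerivWithinAt) (fun t ht => hderiv_le t ht.1)
    (right_mem_Icc.2 zero_le_one)
  simpa using this

theorem sq_norm_sub_gradient_le (hconv : ConvexOn ℝ univ f) (hf : Differentiable ℝ f)
    (hsmooth : ∀ x y, ‖gradient f x - gradient f y‖ ≤ L * ‖x - y‖) (x y : E) :
    ‖gradient f x - gradient f y‖ ^ 2 ≤ 2 * L * (f x - f y - ⟪gradient f y, x - y⟫_ℝ) := by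
  rcases eq_or_ne x y with rfl | hxy
  · simp
  have hL : 0 ≤ L := nonneg_of_mul_nonneg_left ((norm_nonneg _).trans (hsmooth x y))
    (norm_pos_iff.2 (sub_ne_zero.2 hxy))
  rcases hL.eq_or_lt with rfl | hL
  · have : ‖gradient f x - gradient f y‖ ≤ 0 := by simpa using hsmooth x y
    simp [norm_le_zero_iff.1 this]
  set w := gradient f x - gradient f y
  -- Compare the descent step from `x` to `z` with the supporting hyperplane of `f` at `y`.
  set z := x - L⁻¹ • w
  have hdescent := le_add_inner_gradient_add_sq hf hsmooth x z
  have hsupport := hconv.inner_gradient_le_sub (hf y) z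
  have hzx : z - x = -(L⁻¹ • w) := by simp [z]
  rw [show z - y = (x - y) + (z - x) by abel, inner_add_right] at hsupport
  have hinner : ⟪gradient f x, z - x⟫_ℝ = ⟪gradient f y, z - x⟫_ℝ - ‖w‖ ^ 2 / L := by
    rw [show gradient f x = gradient f y + w by simp [w], inner_add_left, hzx]
    simp only [inner_neg_right, real_inner_smul_right, real_inner_self_eq_norm_sq]
    ring
  have hnorm : L / 2 * ‖z - x‖ ^ 2 = ‖w‖ ^ 2 / (2 * L) := by
    rw [hzx, norm_neg, norm_smul, Real.norm_of_nonneg (inv_nonneg.2 hL.le)]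
    field_simp
  have key : ‖w‖ ^ 2 / (2 * L) ≤ f x - f y - ⟪gradient f y, x - y⟫_ℝ := by
    have : ‖w‖ ^ 2 / L = 2 * (‖w‖ ^ 2 / (2 * L)) := by field_simp
    linarith
  rwa [div_le_iff₀ (by positivity), mul_comm] at key

end Smooth

theorem sq_norm_avg_le_avg_sq_norm {F ι : Type*} [SeminormedAddCommGroup F] [NormedSpace ℝ F]
    (s : Finset ι) (v : ι → F) :
    ‖(#s : ℝ)⁻¹ • ∑ i ∈ s, v i‖ ^ 2 ≤ (#s : ℝ)⁻¹ * ∑ i ∈ s, ‖v i‖ ^ 2 := by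
  rcases s.eq_empty_or_nonempty with rfl | hs
  · simp
  have := ((convexOn_norm convex_univ).pow (fun _ _ => norm_nonneg _) 2).map_sum_le
    (t := s) (w := fun _ => (#s : ℝ)⁻¹) (p := v) (fun _ _ => by positivity)
    (by simp [hs.card_ne_zero]) (fun _ _ => mem_univ _)
  simpa [smul_sum, mul_sum] using this

theorem sq_norm_avg_grad_le_general {d n : ℕ} (L : ℝ)
    (f : Fin n → EuclideanSpace ℝ (Fin d) → ℝ)
    (hdiff : ∀ i, Differentiable ℝ (f i))
    (hconv : ∀ i, ConvexOn ℝ Set.univ (f i))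
    (hsmooth : ∀ i, ∀ x y : EuclideanSpace ℝ (Fin d),
      ‖gradient (f i) x - gradient (f i) y‖ ≤ L * ‖x - y‖)
    (xstar : EuclideanSpace ℝ (Fin d))
    (hstar : ∑ i, gradient (f i) xstar = 0)
    (x : Fin n → EuclideanSpace ℝ (Fin d)) :
    ‖(n : ℝ)⁻¹ • ∑ i, gradient (f i) (x i)‖ ^ 2
      ≤ (2 * L ^ 2 / n) * ∑ i, ‖(n : ℝ)⁻¹ • (∑ j, x j) - x i‖ ^ 2
        + (4 * L / n) * ∑ i, (f i ((n : ℝ)⁻¹ • ∑ j, x j) - f i xstar) := by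
  set xb := (n : ℝ)⁻¹ • ∑ j, x j
  set A := (n : ℝ)⁻¹ • ∑ i, (gradient (f i) (x i) - gradient (f i) xb)
  set B := (n : ℝ)⁻¹ • ∑ i, (gradient (f i) xb - gradient (f i) xstar)
  have havg (v : Fin n → EuclideanSpace ℝ (Fin d)) :
      ‖(n : ℝ)⁻¹ • ∑ i, v i‖ ^ 2 ≤ (n : ℝ)⁻¹ * ∑ i, ‖v i‖ ^ 2 := by
    simpa using sq_norm_avg_le_avg_sq_norm Finset.univ v
  have hsplit : (n : ℝ)⁻¹ • ∑ i, gradient (f i) (x i) = A + B := by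
    rw [← smul_add, ← sum_add_distrib]
    simp only [sub_add_sub_cancel, sum_sub_distrib, hstar, sub_zero]
  have hA : ‖A‖ ^ 2 ≤ (n : ℝ)⁻¹ * (L ^ 2 * ∑ i, ‖xb - x i‖ ^ 2) := by
    refine (havg _).trans (mul_le_mul_of_nonneg_left ?_ (by positivity))
    rw [mul_sum]
    gcongr with i
    rw [← mul_pow, norm_sub_rev xb]
    exact pow_le_pow_left₀ (norm_nonneg _) (hsmooth i _ _) 2
  have hB : ‖B‖ ^ 2 ≤ (n : ℝ)⁻¹ * (2 * L * ∑ i, (f i xb - f i xstar)) := by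
    refine (havg _).trans ?_
    have hbregman := sum_le_sum fun i (_ : i ∈ Finset.univ) =>
      sq_norm_sub_gradient_le (hconv i) (hdiff i) (hsmooth i) xb xstar
    rw [← mul_sum, sum_sub_distrib, ← sum_inner, hstar, inner_zero_left, sub_zero] at hbregman
    gcongr
  calc _ = ‖A + B‖ ^ 2 := by rw [hsplit]
    _ ≤ (‖A‖ + ‖B‖) ^ 2 := by gcongr; exact norm_add_le A B
    _ ≤ 2 * (‖A‖ ^ 2 + ‖B‖ ^ 2) := add_sq_le
    _ ≤ 2 * ((n : ℝ)⁻¹ * (L ^ 2 * ∑ i, ‖xb - x i‖ ^ 2)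
          + (n : ℝ)⁻¹ * (2 * L * ∑ i, (f i xb - f i xstar))) := by gcongr
    _ = _ := by ring

/-- Let `f_1, …, f_n : ℝ^d → ℝ` each be differentiable, convex and
`L`-smooth, and let `x* ∈ ℝ^d` satisfy `Σᵢ ∇f_i(x*) = 0`.  Then for any points
`x_1, …, x_n ∈ ℝ^d`, with `x̄ := (1/n)·Σᵢ x_i`:
`‖(1/n)·Σᵢ ∇f_i(x_i)‖² ≤ (2L²/n)·Σᵢ ‖x̄ − x_i‖² + (4L/n)·Σᵢ (f_i(x̄) − f_i(x*))`. -/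
theorem sq_norm_avg_grad_le {d n : ℕ} (hn : 0 < n) (L : ℝ)
    (f : Fin n → EuclideanSpace ℝ (Fin d) → ℝ)
    (hdiff : ∀ i, Differentiable ℝ (f i))
    (hconv : ∀ i, ConvexOn ℝ Set.univ (f i))
    (hsmooth : ∀ i, ∀ x y : EuclideanSpace ℝ (Fin d),
      ‖gradient (f i) x - gradient (f i) y‖ ≤ L * ‖x - y‖)
    (xstar : EuclideanSpace ℝ (Fin d))
    (hstar : ∑ i, gradient (f i) xstar = 0)
    (x : Fin n → EuclideanSpace ℝ (Fin d)) :
    ‖(n : ℝ)⁻¹ • ∑ i, gradient (f i) (x i)‖ ^ 2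
      ≤ (2 * L ^ 2 / n) * ∑ i, ‖(n : ℝ)⁻¹ • (∑ j, x j) - x i‖ ^ 2
        + (4 * L / n) * ∑ i, (f i ((n : ℝ)⁻¹ • ∑ j, x j) - f i xstar) :=
  sq_norm_avg_grad_le_general L f hdiff hconv hsmooth xstar hstar x
end

section
/- Let f_1, …, f_n : ℝ^d → ℝ each be differentiable, L-smooth and μ-strongly convex with 0 < μ ≤ L, let f := (1/n)·Σᵢ f_i with minimizer x* ∈ ℝ^d, and let 0 < α ≤ 1/(4L). Then for any points x_1, …, x_n ∈ ℝ^d, with x̄ := (1/n)·Σᵢ x_i: ‖x̄ − (α/n)·Σ_{i=1}^n ∇f_i(x_i) − x*‖² ≤ (1 − αμ/2)·‖x̄ − x*‖² − α·( f(x̄) − f(x*) ) + (5αL/(2n))·Σ_{i=1}^n ‖x̄ − x_i‖². -/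
/-!
With `x̄` the average point, `g = (1/n) Σ ∇fᵢ(xᵢ)` and `G = ∇f(x̄)`, expand
`‖x̄ - αg - x*‖² = ‖x̄ - x*‖² - 2α⟪g, x̄ - x*⟫ + α²‖g‖²`.
Comparing each `fᵢ` at `x̄` and at `x*` with its linearisation at `xᵢ` (descent lemma from above,
strong convexity from below) bounds `⟪g, x̄ - x*⟫` below by `f(x̄) - f(x*) + (μ/4)‖x̄ - x*‖²`, up to
the spread `(1/n) Σ ‖x̄ - xᵢ‖²`. For the quadratic term, `‖g‖² ≤ 2‖G‖² + 2‖g - G‖²`, where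
`‖G‖² ≤ 2L(f(x̄) - f(x*))` because a gradient step of length `1/L` from `x̄` cannot go below the
minimum, and `‖g - G‖²` is controlled by the spread through `L`-smoothness and Jensen. Since
`αL ≤ 1/4`, the quadratic term is absorbed by the linear one.
-/

open Finset InnerProductSpace
open scoped RealInnerProductSpace

section Average

variable {F G : Type*} [SeminormedAddCommGroup F] [SeminormedAddCommGroup G] [NormedSpace ℝ G]

theorem norm_inv_card_smul_sum_le {ι : Type*} [Fintype ι] (v : ι → G) :
    ‖(Fintype.card ι : ℝ)⁻¹ • ∑ i, v i‖ ≤ (Fintype.card ι : ℝ)⁻¹ * ∑ i, ‖v i‖ := by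
  rw [norm_smul, norm_inv, Real.norm_natCast]
  gcongr
  exact norm_sum_le _ _

theorem sq_norm_inv_card_smul_sum_le {ι : Type*} [Fintype ι] (v : ι → G) :
    ‖(Fintype.card ι : ℝ)⁻¹ • ∑ i, v i‖ ^ 2 ≤ (Fintype.card ι : ℝ)⁻¹ * ∑ i, ‖v i‖ ^ 2 := by
  calc ‖(Fintype.card ι : ℝ)⁻¹ • ∑ i, v i‖ ^ 2 ≤ ((Fintype.card ι : ℝ)⁻¹ * ∑ i, ‖v i‖) ^ 2 := by
        gcongr
        exact norm_inv_card_smul_sum_le v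
    _ ≤ (Fintype.card ι : ℝ)⁻¹ * ∑ i, ‖v i‖ ^ 2 := by
        simpa only [inv_mul_eq_div, card_univ] using
          sum_div_card_sq_le_sum_sq_div_card (s := univ) (f := fun i => ‖v i‖)

theorem norm_inv_smul_sum_sub_le {n : ℕ} (hn : 0 < n) {g : Fin n → F → G} {L : ℝ}
    (hL : ∀ i a b, ‖g i a - g i b‖ ≤ L * ‖a - b‖) (a b : F) :
    ‖(n : ℝ)⁻¹ • ∑ i, g i a - (n : ℝ)⁻¹ • ∑ i, g i b‖ ≤ L * ‖a - b‖ := by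
  calc ‖(n : ℝ)⁻¹ • ∑ i, g i a - (n : ℝ)⁻¹ • ∑ i, g i b‖
      = ‖(n : ℝ)⁻¹ • ∑ i, (g i a - g i b)‖ := by rw [← smul_sub, ← sum_sub_distrib]
    _ ≤ (n : ℝ)⁻¹ * ∑ i, ‖g i a - g i b‖ := by
        simpa only [Fintype.card_fin] using norm_inv_card_smul_sum_le fun i => g i a - g i b
    _ ≤ (n : ℝ)⁻¹ * ∑ _i : Fin n, L * ‖a - b‖ := by gcongr with i; exact hL i a b
    _ = L * ‖a - b‖ := by
        rw [sum_const, card_univ, Fintype.card_fin, nsmul_eq_mul]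
        field_simp

theorem sq_norm_inv_smul_sum_sub_le {n : ℕ} {g : Fin n → F → G} {L : ℝ}
    (hL : ∀ i a b, ‖g i a - g i b‖ ≤ L * ‖a - b‖) (x : Fin n → F) (y : F) :
    ‖(n : ℝ)⁻¹ • ∑ i, g i (x i) - (n : ℝ)⁻¹ • ∑ i, g i y‖ ^ 2
      ≤ L ^ 2 * ((n : ℝ)⁻¹ * ∑ i, ‖y - x i‖ ^ 2) := by
  calc ‖(n : ℝ)⁻¹ • ∑ i, g i (x i) - (n : ℝ)⁻¹ • ∑ i, g i y‖ ^ 2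
      = ‖(n : ℝ)⁻¹ • ∑ i, (g i (x i) - g i y)‖ ^ 2 := by rw [← smul_sub, ← sum_sub_distrib]
    _ ≤ (n : ℝ)⁻¹ * ∑ i, ‖g i (x i) - g i y‖ ^ 2 := by
        simpa only [Fintype.card_fin] using
          sq_norm_inv_card_smul_sum_le fun i => g i (x i) - g i y
    _ ≤ (n : ℝ)⁻¹ * ∑ i, (L * ‖y - x i‖) ^ 2 := by
        gcongr with i
        rw [norm_sub_rev y]
        exact hL i _ _
    _ = L ^ 2 * ((n : ℝ)⁻¹ * ∑ i, ‖y - x i‖ ^ 2) := by simp only [mul_pow, ← mul_sum]; ring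

end Average

theorem norm_sub_smul_sub_sq_le {E : Type*} [NormedAddCommGroup E] [InnerProductSpace ℝ E]
    {x m g G : E} {α L μ D S : ℝ} (hα : 0 ≤ α) (hL : 0 ≤ L) (hαL : α * L ≤ 1 / 4)
    (hμL : μ ≤ L) (hD : 0 ≤ D) (hS : 0 ≤ S)
    (hcorr : D + μ / 4 * ‖x - m‖ ^ 2 ≤ ⟪g, x - m⟫_ℝ + (L + μ) / 2 * S)
    (hG : ‖G‖ ^ 2 ≤ 2 * L * D) (hgG : ‖g - G‖ ^ 2 ≤ L ^ 2 * S) :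
    ‖x - α • g - m‖ ^ 2 ≤ (1 - α * μ / 2) * ‖x - m‖ ^ 2 - α * D + 5 / 2 * α * L * S := by
  have hg : ‖g‖ ^ 2 ≤ 2 * ‖G‖ ^ 2 + 2 * ‖g - G‖ ^ 2 := by
    have := parallelogram_law_with_norm ℝ G (g - G)
    rw [add_sub_cancel] at this
    linarith [sq_nonneg ‖G - (g - G)‖]
  have hexpand : ‖x - α • g - m‖ ^ 2 = ‖x - m‖ ^ 2 - 2 * α * ⟪g, x - m⟫_ℝ + α ^ 2 * ‖g‖ ^ 2 := by
    rw [sub_right_comm, norm_sub_sq_real, real_inner_smul_right, real_inner_comm, norm_smul,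
      Real.norm_eq_abs, mul_pow, sq_abs]
    ring
  rw [hexpand]
  linarith [mul_le_mul_of_nonneg_left hcorr (by positivity : 0 ≤ 2 * α),
    mul_le_mul_of_nonneg_left hg (sq_nonneg α), mul_le_mul_of_nonneg_left hG (sq_nonneg α),
    mul_le_mul_of_nonneg_left hgG (sq_nonneg α),
    mul_nonneg (mul_nonneg hα (by linarith : 0 ≤ 1 - 4 * (α * L))) hD,
    mul_nonneg (mul_nonneg (mul_nonneg hα hL) (by linarith : 0 ≤ 1 - 4 * (α * L))) hS,
    mul_nonneg (mul_nonneg hα (by linarith : 0 ≤ L - μ)) hS]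

section Gradient

variable {E : Type*} [NormedAddCommGroup E] [InnerProductSpace ℝ E] [CompleteSpace E]

theorem HasGradientAt.hasDerivAt_add_smul {f : E → ℝ} {g y v : E} {t : ℝ}
    (hf : HasGradientAt f g (y + t • v)) :
    HasDerivAt (fun s : ℝ => f (y + s • v)) ⟪g, v⟫_ℝ t := by
  have hline : HasDerivAt (fun s : ℝ => y + s • v) v t := by
    simpa using ((hasDerivAt_id t).smul_const v).const_add y
  exact (hasGradientAt_iff_hasFDerivAt.mp hf).comp_hasDerivAt t hline

theorem apply_le_add_inner_add_sq_of_lipschitz_gradient {f : E → ℝ} {f' : E → E} {L : ℝ}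
    (hf : ∀ x, HasGradientAt f (f' x) x) (hL : ∀ a b, ‖f' a - f' b‖ ≤ L * ‖a - b‖)
    (y z : E) : f z ≤ f y + ⟪f' y, z - y⟫_ℝ + L / 2 * ‖z - y‖ ^ 2 := by
  set v := z - y
  have hφ : ∀ t : ℝ, HasDerivAt (fun s : ℝ => f (y + s • v)) ⟪f' (y + t • v), v⟫_ℝ t :=
    fun t => (hf _).hasDerivAt_add_smul
  have hparabola : ∀ t : ℝ, HasDerivAt (fun s : ℝ => f y + s * ⟪f' y, v⟫_ℝ + L / 2 * s ^ 2 * ‖v‖ ^ 2)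
      (⟪f' y, v⟫_ℝ + L * t * ‖v‖ ^ 2) t := by
    intro t
    have := (((hasDerivAt_id t).mul_const ⟪f' y, v⟫_ℝ).const_add (f y)).add
      (((hasDerivAt_pow 2 t).const_mul (L / 2)).mul_const (‖v‖ ^ 2))
    exact this.congr_deriv (by push_cast; ring)
  have hslope : ∀ t ∈ Set.Ico (0 : ℝ) 1, ⟪f' (y + t • v), v⟫_ℝ ≤ ⟪f' y, v⟫_ℝ + L * t * ‖v‖ ^ 2 := by
    rintro t ⟨ht, -⟩
    have : ⟪f' (y + t • v) - f' y, v⟫_ℝ ≤ L * t * ‖v‖ ^ 2 :=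
      calc ⟪f' (y + t • v) - f' y, v⟫_ℝ ≤ ‖f' (y + t • v) - f' y‖ * ‖v‖ := real_inner_le_norm _ _
        _ ≤ L * ‖t • v‖ * ‖v‖ := by
          gcongr
          simpa using hL (y + t • v) y
        _ = L * t * ‖v‖ ^ 2 := by rw [norm_smul, Real.norm_of_nonneg ht]; ring
    rw [inner_sub_left] at this
    linarith
  have key := image_le_of_deriv_right_le_deriv_boundary
    (fun t _ => (hφ t).continuousAt.continuousWithinAt) (fun t _ => (hφ t).hasDerivWithinAt)
    (by simp) (fun t _ => (hparabola t).continuousAt.continuousWithinAt)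
    (fun t _ => (hparabola t).hasDerivWithinAt) hslope (Set.right_mem_Icc.mpr zero_le_one)
  simpa [v] using key

theorem ConvexOn.add_inner_le_of_hasGradientAt {f : E → ℝ} {g y : E}
    (hc : ConvexOn ℝ Set.univ f) (hf : HasGradientAt f g y) (z : E) :
    f y + ⟪g, z - y⟫_ℝ ≤ f z := by
  have hline : ConvexOn ℝ Set.univ (fun t : ℝ => f (y + t • (z - y))) := by
    simpa [Function.comp_def, AffineMap.lineMap_apply, add_comm]
      using hc.comp_affineMap (AffineMap.lineMap y z)
  have hder : HasDerivAt (fun t : ℝ => f (y + t • (z - y))) ⟪g, z - y⟫_ℝ 0 :=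
    HasGradientAt.hasDerivAt_add_smul (by simpa using hf)
  have := hline.le_slope_of_hasDerivAt (Set.mem_univ 0) (Set.mem_univ 1) zero_lt_one hder
  simp only [slope_def_field, one_smul, add_sub_cancel, zero_smul, add_zero, sub_zero,
    div_one] at this
  linarith

theorem HasGradientAt.sub_mul_norm_sq {f : E → ℝ} {g y : E} (hf : HasGradientAt f g y) (c : ℝ) :
    HasGradientAt (fun x => f x - c * ‖x‖ ^ 2) (g - (2 * c) • y) y := by
  rw [hasGradientAt_iff_hasFDerivAt] at hf ⊢
  refine (hf.sub ((hasStrictFDerivAt_norm_sq y).hasFDerivAt.const_mul c)).congr_fderiv ?_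
  ext w
  simp only [sub_apply, smul_apply, toDual_apply_apply,
    coe_innerSL_apply, map_sub, map_smul, smul_eq_mul, nsmul_eq_mul, Nat.cast_ofNat]
  ring

theorem add_inner_add_sq_le_of_convexOn_sub_sq {f : E → ℝ} {g y : E} {μ : ℝ}
    (hc : ConvexOn ℝ Set.univ (fun x => f x - μ / 2 * ‖x‖ ^ 2)) (hf : HasGradientAt f g y)
    (z : E) : f y + ⟪g, z - y⟫_ℝ + μ / 2 * ‖z - y‖ ^ 2 ≤ f z := by
  have h := hc.add_inner_le_of_hasGradientAt (hf.sub_mul_norm_sq (μ / 2)) z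
  have hz : ‖z‖ ^ 2 = ‖y‖ ^ 2 + 2 * ⟪y, z - y⟫_ℝ + ‖z - y‖ ^ 2 := by
    rw [← norm_add_sq_real, add_sub_cancel]
  rw [inner_sub_left, real_inner_smul_left, hz] at h
  linarith

theorem norm_sq_le_two_mul_sub_of_lipschitz_gradient {f : E → ℝ} {f' : E → E} {L : ℝ}
    (hL0 : 0 < L) (hf : ∀ x, HasGradientAt f (f' x) x)
    (hL : ∀ a b, ‖f' a - f' b‖ ≤ L * ‖a - b‖) {m : E} (hm : ∀ x, f m ≤ f x) (y : E) :
    ‖f' y‖ ^ 2 ≤ 2 * L * (f y - f m) := by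
  have h := apply_le_add_inner_add_sq_of_lipschitz_gradient hf hL y (y - L⁻¹ • f' y)
  rw [sub_sub_cancel_left, inner_neg_right, real_inner_smul_right, real_inner_self_eq_norm_sq,
    norm_neg, norm_smul, Real.norm_of_nonneg (inv_nonneg.mpr hL0.le)] at h
  have hsq : L / 2 * (L⁻¹ * ‖f' y‖) ^ 2 = L⁻¹ / 2 * ‖f' y‖ ^ 2 := by field_simp
  have hdecrease : L⁻¹ / 2 * ‖f' y‖ ^ 2 ≤ f y - f m := by linarith [hm (y - L⁻¹ • f' y)]
  calc ‖f' y‖ ^ 2 = 2 * L * (L⁻¹ / 2 * ‖f' y‖ ^ 2) := by field_simp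
    _ ≤ 2 * L * (f y - f m) := by gcongr

theorem apply_sub_apply_le_inner_gradient_add_sq {f : E → ℝ} {f' : E → E} {L μ : ℝ}
    (hμ : 0 ≤ μ) (hf : ∀ x, HasGradientAt f (f' x) x)
    (hL : ∀ a b, ‖f' a - f' b‖ ≤ L * ‖a - b‖)
    (hc : ConvexOn ℝ Set.univ (fun x => f x - μ / 2 * ‖x‖ ^ 2)) (x y m : E) :
    f x - f m + μ / 4 * ‖x - m‖ ^ 2 ≤ ⟪f' y, x - m⟫_ℝ + (L + μ) / 2 * ‖x - y‖ ^ 2 := by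
  have hupper := apply_le_add_inner_add_sq_of_lipschitz_gradient hf hL y x
  have hlower := add_inner_add_sq_le_of_convexOn_sub_sq hc (hf y) m
  have hsplit : ‖x - m‖ ^ 2 ≤ 2 * ‖x - y‖ ^ 2 + 2 * ‖y - m‖ ^ 2 := by
    have := parallelogram_law_with_norm ℝ (x - y) (y - m)
    rw [sub_add_sub_cancel] at this
    linarith [sq_nonneg ‖x - y - (y - m)‖]
  have hinner : ⟪f' y, x - m⟫_ℝ = ⟪f' y, x - y⟫_ℝ - ⟪f' y, m - y⟫_ℝ := by
    rw [← inner_sub_right, sub_sub_sub_cancel_right]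
  rw [norm_sub_rev m y] at hlower
  linarith [mul_le_mul_of_nonneg_left hsplit hμ]

theorem HasGradientAt.const_mul_sum {ι : Type*} (s : Finset ι) {f : ι → E → ℝ} {g : ι → E}
    {y : E} (c : ℝ) (h : ∀ i ∈ s, HasGradientAt (f i) (g i) y) :
    HasGradientAt (fun x => c * ∑ i ∈ s, f i x) (c • ∑ i ∈ s, g i) y := by
  simp only [hasGradientAt_iff_hasFDerivAt] at h ⊢
  refine ((HasFDerivAt.fun_sum h).const_mul c).congr_fderiv ?_
  ext w
  simp [toDual_apply_apply]

variable {n : ℕ} {f : Fin n → E → ℝ} {f' : Fin n → E → E} {L : ℝ}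

theorem sq_norm_inv_smul_sum_le_two_mul_sub (hn : 0 < n) (hL0 : 0 < L)
    (hf : ∀ i x, HasGradientAt (f i) (f' i x) x) (hL : ∀ i a b, ‖f' i a - f' i b‖ ≤ L * ‖a - b‖)
    {m : E} (hm : ∀ x, (n : ℝ)⁻¹ * ∑ i, f i m ≤ (n : ℝ)⁻¹ * ∑ i, f i x) (y : E) :
    ‖(n : ℝ)⁻¹ • ∑ i, f' i y‖ ^ 2
      ≤ 2 * L * ((n : ℝ)⁻¹ * ∑ i, f i y - (n : ℝ)⁻¹ * ∑ i, f i m) :=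
  norm_sq_le_two_mul_sub_of_lipschitz_gradient hL0
    (fun x => HasGradientAt.const_mul_sum _ _ fun i _ => hf i x)
    (norm_inv_smul_sum_sub_le hn hL) hm y

theorem inv_mul_sum_sub_add_sq_le_inner_add {μ : ℝ} (hn : 0 < n) (hμ : 0 ≤ μ)
    (hf : ∀ i x, HasGradientAt (f i) (f' i x) x) (hL : ∀ i a b, ‖f' i a - f' i b‖ ≤ L * ‖a - b‖)
    (hc : ∀ i, ConvexOn ℝ Set.univ (fun x => f i x - μ / 2 * ‖x‖ ^ 2))
    (x : Fin n → E) (y m : E) :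
    ((n : ℝ)⁻¹ * ∑ i, f i y - (n : ℝ)⁻¹ * ∑ i, f i m) + μ / 4 * ‖y - m‖ ^ 2
      ≤ ⟪(n : ℝ)⁻¹ • ∑ i, f' i (x i), y - m⟫_ℝ
        + (L + μ) / 2 * ((n : ℝ)⁻¹ * ∑ i, ‖y - x i‖ ^ 2) := by
  have hn' : (n : ℝ) ≠ 0 := by positivity
  calc ((n : ℝ)⁻¹ * ∑ i, f i y - (n : ℝ)⁻¹ * ∑ i, f i m) + μ / 4 * ‖y - m‖ ^ 2
      = (n : ℝ)⁻¹ * ∑ i, (f i y - f i m + μ / 4 * ‖y - m‖ ^ 2) := by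
        rw [sum_add_distrib, sum_sub_distrib, sum_const, card_univ, Fintype.card_fin,
          nsmul_eq_mul]
        field_simp
    _ ≤ (n : ℝ)⁻¹ * ∑ i, (⟪f' i (x i), y - m⟫_ℝ + (L + μ) / 2 * ‖y - x i‖ ^ 2) := by
        gcongr (n : ℝ)⁻¹ * ?_
        exact sum_le_sum fun i _ =>
          apply_sub_apply_le_inner_gradient_add_sq hμ (hf i) (hL i) (hc i) y (x i) m
    _ = ⟪(n : ℝ)⁻¹ • ∑ i, f' i (x i), y - m⟫_ℝ
          + (L + μ) / 2 * ((n : ℝ)⁻¹ * ∑ i, ‖y - x i‖ ^ 2) := by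
        rw [sum_add_distrib, real_inner_smul_left, sum_inner, ← mul_sum]
        ring

end Gradient

/-- Let `f_1, …, f_n : ℝ^d → ℝ` each be differentiable, `L`-smooth and
`μ`-strongly convex with `0 < μ ≤ L`, let `f := (1/n)·Σᵢ f_i` with minimizer `x* ∈ ℝ^d`,
and let `0 < α ≤ 1/(4L)`.  Then for any points `x_1, …, x_n ∈ ℝ^d`, with
`x̄ := (1/n)·Σᵢ x_i`:
`‖x̄ − (α/n)·Σᵢ ∇f_i(x_i) − x*‖² ≤ (1 − αμ/2)·‖x̄ − x*‖² − α·(f(x̄) − f(x*))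
  + (5αL/(2n))·Σᵢ ‖x̄ − x_i‖²`. -/
theorem avg_gradient_step_contraction {d n : ℕ} (hn : 0 < n) (L μ α : ℝ)
    (hμ0 : 0 < μ) (hμL : μ ≤ L) (hα0 : 0 < α) (hα : α ≤ 1 / (4 * L))
    (f : Fin n → EuclideanSpace ℝ (Fin d) → ℝ)
    (hdiff : ∀ i, Differentiable ℝ (f i))
    (hsmooth : ∀ i, ∀ x y : EuclideanSpace ℝ (Fin d),
      ‖gradient (f i) x - gradient (f i) y‖ ≤ L * ‖x - y‖)
    (hconv : ∀ i, ConvexOn ℝ Set.univ (fun x : EuclideanSpace ℝ (Fin d) =>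
      f i x - μ / 2 * ‖x‖ ^ 2))
    (xstar : EuclideanSpace ℝ (Fin d))
    (hstar : ∀ y : EuclideanSpace ℝ (Fin d),
      (n : ℝ)⁻¹ * ∑ i, f i xstar ≤ (n : ℝ)⁻¹ * ∑ i, f i y)
    (x : Fin n → EuclideanSpace ℝ (Fin d)) :
    ‖(n : ℝ)⁻¹ • (∑ j, x j) - (α / n) • (∑ i, gradient (f i) (x i)) - xstar‖ ^ 2
      ≤ (1 - α * μ / 2) * ‖(n : ℝ)⁻¹ • (∑ j, x j) - xstar‖ ^ 2
        - α * ((n : ℝ)⁻¹ * ∑ i, f i ((n : ℝ)⁻¹ • ∑ j, x j)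
               - (n : ℝ)⁻¹ * ∑ i, f i xstar)
        + (5 * α * L / (2 * n)) * ∑ i, ‖(n : ℝ)⁻¹ • (∑ j, x j) - x i‖ ^ 2 := by
  have hL : 0 < L := hμ0.trans_le hμL
  have hαL : α * L ≤ 1 / 4 := by
    have := (le_div_iff₀ (by positivity)).mp hα
    linarith
  have hgrad : ∀ i y, HasGradientAt (f i) (gradient (f i) y) y :=
    fun i y => (hdiff i y).hasGradientAt
  set xb := (n : ℝ)⁻¹ • ∑ j, x j
  have key := norm_sub_smul_sub_sq_le hα0.le hL.le hαL hμL (sub_nonneg.2 (hstar xb))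
    (by positivity)
    (inv_mul_sum_sub_add_sq_le_inner_add hn hμ0.le hgrad hsmooth hconv x xb xstar)
    (sq_norm_inv_smul_sum_le_two_mul_sub hn hL hgrad hsmooth hstar xb)
    (sq_norm_inv_smul_sum_sub_le hsmooth x xb)
  calc _ = ‖xb - α • ((n : ℝ)⁻¹ • ∑ i, gradient (f i) (x i)) - xstar‖ ^ 2 := by
        rw [div_eq_mul_inv, mul_smul]
    _ ≤ _ := key
    _ = _ := by ring
end

section
/- Let τ ≥ 1 be an integer, ρ' ∈ (0, 1/4], and b, c, r ≥ 0 with b ≤ ρ'/4, and let {a_t}_{t≥0}, {e_t}_{t≥0} be nonnegative real sequences satisfying a_t ≤ ρ'·a_{t−τ} + (b/τ)·Σ_{i=t−τ}^{t−1} a_i + c·Σ_{i=t−τ}^{t−1} e_i + r for every t ≥ τ. Define A_t := (1/τ)·Σ_{i=t−τ}^{t−1} a_i and E_t := Σ_{i=t−τ}^{t−1} e_i for t ≥ τ, and ρ := 1 − 2ρ'. Then for every k ≥ τ: A_{k+τ} ≤ (1 − ρ)·A_k + (2c/τ)·Σ_{j=0}^{τ−1} E_{k+j} + 2r. -/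
open Finset

/-- Let `τ ≥ 1` be an integer, `ρ' ∈ (0, 1/4]`, and `b, c, r ≥ 0` with
`b ≤ ρ'/4`, and let `{a_t}`, `{e_t}` be nonnegative real sequences satisfying
`a_t ≤ ρ'·a_{t−τ} + (b/τ)·Σ_{i=t−τ}^{t−1} a_i + c·Σ_{i=t−τ}^{t−1} e_i + r` for every
`t ≥ τ`.  With `A_t := (1/τ)·Σ_{i=t−τ}^{t−1} a_i`, `E_t := Σ_{i=t−τ}^{t−1} e_i` and
`ρ := 1 − 2ρ'`, for every `k ≥ τ`:
`A_{k+τ} ≤ (1 − ρ)·A_k + (2c/τ)·Σ_{j=0}^{τ−1} E_{k+j} + 2r`. -/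
theorem averaged_sequence_recursion {τ : ℕ} (hτ : 1 ≤ τ) {ρ' b c r : ℝ}
    (hρ'0 : 0 < ρ') (hρ'1 : ρ' ≤ 1 / 4)
    (hb0 : 0 ≤ b) (hc0 : 0 ≤ c) (hr0 : 0 ≤ r) (hb : b ≤ ρ' / 4)
    {a e : ℕ → ℝ} (ha : ∀ t, 0 ≤ a t) (he : ∀ t, 0 ≤ e t)
    (hrec : ∀ t, τ ≤ t →
      a t ≤ ρ' * a (t - τ) + (b / τ) * ∑ i ∈ Ico (t - τ) t, a i
        + c * ∑ i ∈ Ico (t - τ) t, e i + r)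
    (A E : ℕ → ℝ)
    (hA : ∀ t, τ ≤ t → A t = (1 / τ) * ∑ i ∈ Ico (t - τ) t, a i)
    (hE : ∀ t, τ ≤ t → E t = ∑ i ∈ Ico (t - τ) t, e i) :
    ∀ k, τ ≤ k →
      A (k + τ) ≤ (1 - (1 - 2 * ρ')) * A k
        + (2 * c / τ) * ∑ j ∈ range τ, E (k + j) + 2 * r := by

  intro k hk
  have hτR : (0:ℝ) < τ := by exact_mod_cast hτ
  set S1 := ∑ i ∈ Ico (k - τ) k, a i with hS1def
  set S2 := ∑ i ∈ Ico k (k + τ), a i with hS2def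
  set SE := ∑ j ∈ range τ, E (k + j) with hSEdef
  have hS1 : 0 ≤ S1 := Finset.sum_nonneg fun i _ => ha i
  have hS2 : 0 ≤ S2 := Finset.sum_nonneg fun i _ => ha i
  have hSE : 0 ≤ SE := by
    apply Finset.sum_nonneg
    intro j _
    rw [hE (k + j) (le_trans hk (Nat.le_add_right k j))]
    exact Finset.sum_nonneg fun i _ => he i
  have hunion : S1 + S2 = ∑ i ∈ Ico (k - τ) (k + τ), a i :=
    Finset.sum_Ico_consecutive a (Nat.sub_le k τ) (Nat.le_add_right k τ)
  have hS1eq : S1 = ∑ j ∈ range τ, a (k - τ + j) := by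
    rw [hS1def, Finset.sum_Ico_eq_sum_range]
    have h : k - (k - τ) = τ := by omega
    rw [h]
  have hS2eq : S2 = ∑ j ∈ range τ, a (k + j) := by
    rw [hS2def, Finset.sum_Ico_eq_sum_range]
    simp
  have key : S2 ≤ ρ' * S1 + b * (S1 + S2) + c * SE + τ * r := by
    calc S2 = ∑ j ∈ range τ, a (k + j) := hS2eq
      _ ≤ ∑ j ∈ range τ, (ρ' * a (k - τ + j) + (b / τ) * (S1 + S2) + c * E (k + j) + r) := by
          apply Finset.sum_le_sum
          intro j hj
          have hjτ : j < τ := Finset.mem_range.mp hj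
          have h1 := hrec (k + j) (le_trans hk (Nat.le_add_right k j))
          have hsub : k + j - τ = k - τ + j := by omega
          have hEeq : E (k + j) = ∑ i ∈ Ico (k - τ + j) (k + j), e i := by
            rw [hE (k + j) (by omega)]
            have h : k + j - τ = k - τ + j := by omega
            rw [h]
          have hbnd : ∑ i ∈ Ico (k - τ + j) (k + j), a i ≤ S1 + S2 := by
            rw [hunion]
            apply Finset.sum_le_sum_of_subset_of_nonneg
            · apply Finset.Ico_subset_Ico <;> omega
            · intro i _ _; exact ha i
          have hbτ : 0 ≤ b / τ := div_nonneg hb0 hτR.le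
          rw [hsub] at h1
          calc a (k + j) ≤ ρ' * a (k - τ + j) + (b / τ) * ∑ i ∈ Ico (k - τ + j) (k + j), a i
              + c * ∑ i ∈ Ico (k - τ + j) (k + j), e i + r := h1
            _ ≤ ρ' * a (k - τ + j) + (b / τ) * (S1 + S2) + c * E (k + j) + r := by
                rw [hEeq]
                gcongr
      _ = ρ' * S1 + (τ : ℝ) * ((b / τ) * (S1 + S2)) + c * SE + τ * r := by
          rw [Finset.sum_add_distrib, Finset.sum_add_distrib, Finset.sum_add_distrib,
            ← Finset.mul_sum, ← Finset.mul_sum, hS1eq]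
          simp [Finset.sum_const, Finset.card_range]
          rw [← Finset.mul_sum]
          ring
      _ = ρ' * S1 + b * (S1 + S2) + c * SE + τ * r := by
          field_simp
  have h1 : b * (1 + 2 * ρ') ≤ ρ' := by nlinarith
  have key2 : S2 ≤ 2 * ρ' * S1 + 2 * c * SE + 2 * (τ * r) := by
    nlinarith [key, mul_nonneg hb0 hS2, mul_nonneg (sub_nonneg.mpr h1) hS1,
      mul_nonneg hb0 (mul_nonneg hc0 hSE), mul_nonneg hb0 (mul_nonneg hτR.le hr0),
      mul_nonneg hc0 hSE, mul_nonneg hτR.le hr0]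
  rw [hA (k + τ) (by omega), hA k hk, Nat.add_sub_cancel]
  calc (1 / (τ:ℝ)) * S2 ≤ (1 / (τ:ℝ)) * (2 * ρ' * S1 + 2 * c * SE + 2 * (τ * r)) := by
        have : (0:ℝ) ≤ 1 / (τ:ℝ) := by positivity
        exact mul_le_mul_of_nonneg_left key2 this
    _ = (1 - (1 - 2 * ρ')) * ((1 / (τ:ℝ)) * S1) + (2 * c / τ) * SE + 2 * r := by
        field_simp
        ring
end

section
/- Let τ ≥ 1 be an integer, ρ' ∈ (0, 1/4], and b, c, r ≥ 0 with b ≤ ρ'/4, and let {a_t}_{t≥0}, {e_t}_{t≥0} be nonnegative real sequences satisfying a_t ≤ ρ'·a_{t−τ} + (b/τ)·Σ_{i=t−τ}^{t−1} a_i + c·Σ_{i=t−τ}^{t−1} e_i + r for every t ≥ τ. Define A_t := (1/τ)·Σ_{i=t−τ}^{t−1} a_i and E_t := Σ_{i=t−τ}^{t−1} e_i for t ≥ τ, and ρ := 1 − 2ρ'. Then for every k ≥ τ: A_{k+τ} + a_{k+τ} ≤ (1 − 3ρ/4)·(A_k + a_k) + c·Σ_{j=0}^{τ−1} ( (3/τ)·E_{k+j}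 + e_{k+j} ) + 4r. -/
open Finset

/-- Let `τ ≥ 1` be an integer, `ρ' ∈ (0, 1/4]`, and `b, c, r ≥ 0` with
`b ≤ ρ'/4`, and let `{a_t}`, `{e_t}` be nonnegative real sequences satisfying
`a_t ≤ ρ'·a_{t−τ} + (b/τ)·Σ_{i=t−τ}^{t−1} a_i + c·Σ_{i=t−τ}^{t−1} e_i + r` for every
`t ≥ τ`.  With `A_t := (1/τ)·Σ_{i=t−τ}^{t−1} a_i`, `E_t := Σ_{i=t−τ}^{t−1} e_i` and
`ρ := 1 − 2ρ'`, for every `k ≥ τ`: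
`A_{k+τ} + a_{k+τ} ≤ (1 − 3ρ/4)·(A_k + a_k) + c·Σ_{j=0}^{τ−1} ((3/τ)·E_{k+j} + e_{k+j}) + 4r`. -/
theorem averaged_plus_last_recursion {τ : ℕ} (hτ : 1 ≤ τ) {ρ' b c r : ℝ}
    (hρ'0 : 0 < ρ') (hρ'1 : ρ' ≤ 1 / 4)
    (hb0 : 0 ≤ b) (hc0 : 0 ≤ c) (hr0 : 0 ≤ r) (hb : b ≤ ρ' / 4)
    {a e : ℕ → ℝ} (ha : ∀ t, 0 ≤ a t) (he : ∀ t, 0 ≤ e t)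
    (hrec : ∀ t, τ ≤ t →
      a t ≤ ρ' * a (t - τ) + (b / τ) * ∑ i ∈ Ico (t - τ) t, a i
        + c * ∑ i ∈ Ico (t - τ) t, e i + r)
    (A E : ℕ → ℝ)
    (hA : ∀ t, τ ≤ t → A t = (1 / τ) * ∑ i ∈ Ico (t - τ) t, a i)
    (hE : ∀ t, τ ≤ t → E t = ∑ i ∈ Ico (t - τ) t, e i) :
    ∀ k, τ ≤ k →
      A (k + τ) + a (k + τ) ≤ (1 - 3 * (1 - 2 * ρ') / 4) * (A k + a k)
        + c * ∑ j ∈ range τ, ((3 / τ) * E (k + j) + e (k + j)) + 4 * r := by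
  intro k hk
  have ht1 : (1:ℝ) ≤ (τ:ℝ) := by exact_mod_cast hτ
  have ht0 : (0:ℝ) < (τ:ℝ) := by linarith
  set t : ℝ := (τ:ℝ) with hts
  set P : ℝ := ∑ i ∈ Ico (k - τ) k, a i with hPdef
  set Q : ℝ := ∑ i ∈ Ico k (k + τ), a i with hQdef
  set SE : ℝ := ∑ j ∈ range τ, E (k + j) with hSEdef
  set Se : ℝ := ∑ j ∈ range τ, e (k + j) with hSedef
  have hkτ : k + τ - τ = k := by omega
  have hkk : k + τ - k = τ := by omega
  have hkk2 : k - (k - τ) = τ := by omega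
  have hP0 : 0 ≤ P := Finset.sum_nonneg fun i _ => ha i
  have hQ0 : 0 ≤ Q := Finset.sum_nonneg fun i _ => ha i
  have hSE0 : 0 ≤ SE := by
    refine Finset.sum_nonneg fun j hj => ?_
    rw [hE (k + j) (by omega)]
    exact Finset.sum_nonneg fun i _ => he i
  have hSe0 : 0 ≤ Se := Finset.sum_nonneg fun j _ => he _
  -- P + Q is the full sum over [k-τ, k+τ)
  have hPQ : P + Q = ∑ i ∈ Ico (k - τ) (k + τ), a i :=
    Finset.sum_Ico_consecutive a (by omega) (by omega)
  -- Q as a range sum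
  have hQr : Q = ∑ j ∈ range τ, a (k + j) := by
    rw [hQdef, Finset.sum_Ico_eq_sum_range, hkk]
  -- P as a range sum
  have hPr : P = ∑ j ∈ range τ, a (k - τ + j) := by
    rw [hPdef, Finset.sum_Ico_eq_sum_range, hkk2]
  -- main averaged inequality
  have I1 : Q ≤ ρ' * P + b * (P + Q) + c * SE + t * r := by
    have hstep : ∀ j ∈ range τ,
        a (k + j) ≤ ρ' * a (k - τ + j) + (b / t) * (P + Q) + c * E (k + j) + r := by
      intro j hj
      have hjτ : j < τ := Finset.mem_range.mp hj
      have h := hrec (k + j) (by omega)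
      have hsub : ∑ i ∈ Ico (k + j - τ) (k + j), a i ≤ P + Q := by
        rw [hPQ]
        exact Finset.sum_le_sum_of_subset_of_nonneg
          (Finset.Ico_subset_Ico (by omega) (by omega)) (fun i _ _ => ha i)
      have hEj : ∑ i ∈ Ico (k + j - τ) (k + j), e i = E (k + j) :=
        (hE (k + j) (by omega)).symm
      have haj : a (k + j - τ) = a (k - τ + j) := by rw [show k + j - τ = k - τ + j by omega]
      rw [hEj, haj] at h
      have hmul := mul_le_mul_of_nonneg_left hsub (div_nonneg hb0 ht0.le)
      linarith
    have e1 : ∑ j ∈ range τ, ρ' * a (k - τ + j) = ρ' * P := by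
      rw [hPr, Finset.mul_sum]
    have e2 : ∑ _j ∈ range τ, (b / t) * (P + Q) = t * ((b / t) * (P + Q)) := by
      rw [Finset.sum_const, Finset.card_range, nsmul_eq_mul, hts]
    have e3 : ∑ j ∈ range τ, c * E (k + j) = c * SE := by
      rw [hSEdef, Finset.mul_sum]
    have e4 : ∑ _j ∈ range τ, r = t * r := by
      rw [Finset.sum_const, Finset.card_range, nsmul_eq_mul, hts]
    have hsumeq : ∑ j ∈ range τ, (ρ' * a (k - τ + j) + (b / t) * (P + Q) + c * E (k + j) + r)
        = ρ' * P + (t * ((b / t) * (P + Q))) + c * SE + t * r := by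
      rw [Finset.sum_add_distrib, Finset.sum_add_distrib, Finset.sum_add_distrib,
        e1, e2, e3, e4]
    have hbt : t * ((b / t) * (P + Q)) = b * (P + Q) := by
      field_simp
    calc Q = ∑ j ∈ range τ, a (k + j) := hQr
      _ ≤ ∑ j ∈ range τ, (ρ' * a (k - τ + j) + (b / t) * (P + Q) + c * E (k + j) + r) :=
          Finset.sum_le_sum hstep
      _ = ρ' * P + b * (P + Q) + c * SE + t * r := by rw [hsumeq, hbt]
  -- last-term inequality, multiplied through by t
  have I2 : t * a (k + τ) ≤ ρ' * (t * a k) + b * Q + c * (t * Se) + t * r := by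
    have h := hrec (k + τ) (by omega)
    rw [hkτ] at h
    have heq : ∑ i ∈ Ico k (k + τ), e i = Se := by
      rw [hSedef, Finset.sum_Ico_eq_sum_range, hkk]
    rw [heq, ← hQdef] at h
    have h2 := mul_le_mul_of_nonneg_left h ht0.le
    have h3 : t * (ρ' * a k + b / t * Q + c * Se + r)
        = ρ' * (t * a k) + b * Q + c * (t * Se) + t * r := by
      field_simp
    rw [h3] at h2
    exact h2
  -- rewrite the goal in terms of P, Q, SE, Se
  rw [hA (k + τ) (by omega), hA k hk, hkτ, ← hQdef, ← hPdef]
  have hsum : ∑ j ∈ range τ, ((3 / t) * E (k + j) + e (k + j))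
      = (3 / t) * SE + Se := by
    rw [Finset.sum_add_distrib, ← Finset.mul_sum, ← hSEdef, ← hSedef]
  rw [hsum]
  -- make everything opaque
  set aτ : ℝ := a (k + τ) with haτdef
  set a0 : ℝ := a k with ha0def
  have haτ0 : 0 ≤ aτ := ha _
  have ha00 : 0 ≤ a0 := ha _
  clear_value t P Q SE Se aτ a0
  clear hrec hA hE hQr hPr hPQ hsum hkτ hkk hkk2 hts hPdef hQdef hSEdef hSedef haτdef ha0def
  -- scalar coefficient inequality
  have hcoef : (1 + b) * (ρ' + b) ≤ (1 - b) * (1/4 + 3 * ρ'/2) := by nlinarith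
  -- bound for (1+b) Q
  have hQbound : (1 + b) * Q ≤ (1/4 + 3 * ρ'/2) * P + 3 * (c * SE) + 3 * (t * r) := by
    have I1' : (1 - b) * Q ≤ (ρ' + b) * P + c * SE + t * r := by linarith
    have hmul := mul_le_mul_of_nonneg_left I1' (show (0:ℝ) ≤ 1 + b by linarith)
    nlinarith [mul_nonneg hc0 hSE0, mul_nonneg ht0.le hr0, hP0, hQ0,
      mul_nonneg hb0 (mul_nonneg hc0 hSE0), mul_nonneg hb0 (mul_nonneg ht0.le hr0),
      mul_nonneg hb0 hQ0, mul_le_mul_of_nonneg_right hcoef hP0]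
  -- key inequality (goal multiplied by t)
  have key : Q + t * aτ ≤ (1 - 3 * (1 - 2 * ρ') / 4) * (P + t * a0)
      + c * (3 * SE + t * Se) + 4 * (t * r) := by
    nlinarith [mul_nonneg hρ'0.le (mul_nonneg ht0.le ha00),
      mul_nonneg ht0.le ha00]
  have hfin := mul_le_mul_of_nonneg_left key (show (0:ℝ) ≤ 1 / t by positivity)
  have hL : (1 / t) * (Q + t * aτ) = 1 / t * Q + aτ := by
    field_simp
  have hR : (1 / t) * ((1 - 3 * (1 - 2 * ρ') / 4) * (P + t * a0)
      + c * (3 * SE + t * Se) + 4 * (t * r))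
      = (1 - 3 * (1 - 2 * ρ') / 4) * (1 / t * P + a0) + c * ((3 / t) * SE + Se) + 4 * r := by
    field_simp
  rw [hL, hR] at hfin
  exact hfin
end
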